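/- arXiv:2107.09459 — 9 statements merged into one kernel-verified Lean document; each statement's English description precedes it below -/
import Mathlib

section
/- For nonnegative n×n matrices K₁,…,K_m and positive weights α₁,…,α_m summing to 1, the spectral radius of the entrywise weighted geometric mean satisfies r(K₁^(α₁) ∘ ⋯ ∘ K_m^(α_m)) ≤ r(K₁)^{α₁} ⋯ r(K_m)^{α_m}, where (K₁^(α₁) ∘ ⋯ ∘ K_m^(α_m))_{ij} = ∏_t K_t(i,j)^{α_t}. -/
open scoped ENNReal
open Finset
noncomputable def specRad {n : ℕ} (A : Matrix (Fin n) (Fin n) ℝ) : ℝ≥0∞ :=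
  spectralRadius ℂ (A.map (algebraMap ℝ ℂ))
noncomputable def opNorm {n : ℕ} (A : Matrix (Fin n) (Fin n) ℝ) : ℝ :=
  ‖Matrix.toEuclideanCLM (𝕜 := ℝ) A‖

section Aux

open scoped NNReal
open Filter Topology

attribute [local instance] Matrix.linftyOpNormedAddCommGroup Matrix.linftyOpNormedRing
  Matrix.linftyOpNormedAlgebra

/-- Finite weighted Hölder inequality. -/
lemma holder_aux {ι κ : Type*} (s : Finset ι) (t : Finset κ) (f : κ → ι → ℝ)
    (hf : ∀ k i, 0 ≤ f k i) (α : κ → ℝ) (hα : ∀ k ∈ t, 0 < α k)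
    (hsum : ∑ k ∈ t, α k = 1) :
    ∑ i ∈ s, ∏ k ∈ t, f k i ^ α k ≤ ∏ k ∈ t, (∑ i ∈ s, f k i) ^ α k := by
  by_cases hz : ∃ k ∈ t, ∑ i ∈ s, f k i = 0
  · obtain ⟨k0, hk0, hS⟩ := hz
    have h1 : ∀ i ∈ s, f k0 i = 0 := fun i hi =>
      (Finset.sum_eq_zero_iff_of_nonneg (fun j _ => hf k0 j)).mp hS i hi
    have hL : ∑ i ∈ s, ∏ k ∈ t, f k i ^ α k = 0 := by
      refine Finset.sum_eq_zero fun i hi => Finset.prod_eq_zero hk0 ?_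
      rw [h1 i hi, Real.zero_rpow (hα k0 hk0).ne']
    have hR : ∏ k ∈ t, (∑ i ∈ s, f k i) ^ α k = 0 := by
      refine Finset.prod_eq_zero hk0 ?_
      rw [hS, Real.zero_rpow (hα k0 hk0).ne']
    rw [hL, hR]
  · push_neg at hz
    set S : κ → ℝ := fun k => ∑ i ∈ s, f k i with hSdef
    have hS : ∀ k ∈ t, 0 < S k := fun k hk =>
      lt_of_le_of_ne (Finset.sum_nonneg fun i _ => hf k i) (Ne.symm (hz k hk))
    have key : ∀ i ∈ s, ∏ k ∈ t, f k i ^ α k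
        = (∏ k ∈ t, S k ^ α k) * ∏ k ∈ t, (f k i / S k) ^ α k := by
      intro i _
      rw [← Finset.prod_mul_distrib]
      refine Finset.prod_congr rfl fun k hk => ?_
      rw [← Real.mul_rpow (hS k hk).le (div_nonneg (hf k i) (hS k hk).le),
        mul_comm (S k), div_mul_cancel₀ _ (hS k hk).ne']
    have hC : 0 ≤ ∏ k ∈ t, S k ^ α k :=
      Finset.prod_nonneg fun k hk => Real.rpow_nonneg (hS k hk).le _
    calc ∑ i ∈ s, ∏ k ∈ t, f k i ^ α k
        = (∏ k ∈ t, S k ^ α k) * ∑ i ∈ s, ∏ k ∈ t, (f k i / S k) ^ α k := by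
          rw [Finset.mul_sum]; exact Finset.sum_congr rfl key
      _ ≤ (∏ k ∈ t, S k ^ α k) * 1 := by
          refine mul_le_mul_of_nonneg_left ?_ hC
          calc ∑ i ∈ s, ∏ k ∈ t, (f k i / S k) ^ α k
              ≤ ∑ i ∈ s, ∑ k ∈ t, α k * (f k i / S k) := by
                refine Finset.sum_le_sum fun i hi => ?_
                exact Real.geom_mean_le_arith_mean_weighted t α _ (fun k hk => (hα k hk).le)
                  hsum (fun k hk => div_nonneg (hf k i) (hS k hk).le)
            _ = ∑ k ∈ t, α k * (S k / S k) := by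
                rw [Finset.sum_comm]
                refine Finset.sum_congr rfl fun k hk => ?_
                rw [← Finset.mul_sum, ← Finset.sum_div]
            _ = 1 := by
                rw [← hsum]
                refine Finset.sum_congr rfl fun k hk => ?_
                rw [div_self (hS k hk).ne', mul_one]
      _ = ∏ k ∈ t, S k ^ α k := mul_one _

lemma entry_nonneg_pow {n : ℕ} {A : Matrix (Fin n) (Fin n) ℝ} (hA : ∀ i j, 0 ≤ A i j)
    (k : ℕ) : ∀ i j, 0 ≤ (A ^ k) i j := by
  induction k with
  | zero =>
    intro i j
    rw [pow_zero]
    by_cases h : i = j <;> simp [Matrix.one_apply, h]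
  | succ k ih =>
    intro i j
    rw [pow_succ, Matrix.mul_apply]
    exact Finset.sum_nonneg fun l _ => mul_nonneg (ih i l) (hA l j)

lemma entry_pow_le {n m : ℕ} (K : Fin m → Matrix (Fin n) (Fin n) ℝ)
    (hK : ∀ t i j, 0 ≤ K t i j) (α : Fin m → ℝ) (hα : ∀ t, 0 < α t)
    (hsum : ∑ t, α t = 1) (k : ℕ) :
    ∀ i j, ((Matrix.of fun i j => ∏ t, (K t i j) ^ (α t)) ^ k) i j
      ≤ ∏ t, ((K t ^ k) i j) ^ α t := by
  induction k with
  | zero =>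
    intro i j
    rw [pow_zero]
    by_cases h : i = j
    · subst h
      simp [Matrix.one_apply_eq, Real.one_rpow]
    · rw [Matrix.one_apply_ne h]
      refine Finset.prod_nonneg fun t _ => Real.rpow_nonneg ?_ _
      rw [pow_zero]
      by_cases h' : i = j <;> simp [Matrix.one_apply, h']
  | succ k ih =>
    intro i j
    rw [pow_succ, Matrix.mul_apply]
    have hGnn : ∀ l j, (0:ℝ) ≤ (Matrix.of fun i j => ∏ t, (K t i j) ^ (α t)) l j := by
      intro l j
      simp only [Matrix.of_apply]
      exact Finset.prod_nonneg fun t _ => Real.rpow_nonneg (hK t l j) _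
    calc ∑ l, ((Matrix.of fun i j => ∏ t, (K t i j) ^ (α t)) ^ k) i l *
            (Matrix.of fun i j => ∏ t, (K t i j) ^ (α t)) l j
        ≤ ∑ l, ∏ t, ((K t ^ k) i l * K t l j) ^ α t := by
          refine Finset.sum_le_sum fun l _ => ?_
          have h1 : ((Matrix.of fun i j => ∏ t, (K t i j) ^ (α t)) ^ k) i l *
              (Matrix.of fun i j => ∏ t, (K t i j) ^ (α t)) l j
              ≤ (∏ t, ((K t ^ k) i l) ^ α t) * ∏ t, (K t l j) ^ α t :=
            mul_le_mul_of_nonneg_right (ih i l) (hGnn l j)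
          refine h1.trans (le_of_eq ?_)
          rw [← Finset.prod_mul_distrib]
          refine Finset.prod_congr rfl fun t _ => ?_
          rw [Real.mul_rpow (entry_nonneg_pow (hK t) k i l) (hK t l j)]
      _ ≤ ∏ t, (∑ l, (K t ^ k) i l * K t l j) ^ α t := by
          refine holder_aux Finset.univ Finset.univ
            (fun t l => (K t ^ k) i l * K t l j) (fun t l =>
              mul_nonneg (entry_nonneg_pow (hK t) k i l) (hK t l j)) α
            (fun t _ => hα t) ?_
          simpa using hsum
      _ = ∏ t, ((K t ^ (k + 1)) i j) ^ α t := by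
          refine Finset.prod_congr rfl fun t _ => ?_
          rw [pow_succ, Matrix.mul_apply]

lemma rowsum_le_norm {n : ℕ} (A : Matrix (Fin n) (Fin n) ℝ) (i : Fin n) :
    ∑ j, |A i j| ≤ ‖A‖ := by
  rw [Matrix.linfty_opNorm_def]
  have h : (∑ j, ‖A i j‖₊ : ℝ≥0) ≤ Finset.univ.sup fun i => ∑ j, ‖A i j‖₊ :=
    Finset.le_sup (f := fun i => ∑ j, ‖A i j‖₊) (Finset.mem_univ i)
  calc ∑ j, |A i j| = ((∑ j, ‖A i j‖₊ : ℝ≥0) : ℝ) := by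
        push_cast
        simp [Real.norm_eq_abs]
    _ ≤ _ := NNReal.coe_le_coe.mpr h

lemma norm_le_of_rows {n : ℕ} (A : Matrix (Fin n) (Fin n) ℝ) (c : ℝ) (hc : 0 ≤ c)
    (h : ∀ i, ∑ j, |A i j| ≤ c) : ‖A‖ ≤ c := by
  rw [Matrix.linfty_opNorm_def]
  have key : (Finset.univ.sup fun i => ∑ j, ‖A i j‖₊) ≤ c.toNNReal := by
    refine Finset.sup_le fun i _ => ?_
    rw [← NNReal.coe_le_coe, Real.coe_toNNReal c hc]
    refine le_trans (le_of_eq ?_) (h i)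
    push_cast
    simp [Real.norm_eq_abs]
  calc ((Finset.univ.sup fun i => ∑ j, ‖A i j‖₊ : ℝ≥0) : ℝ)
      ≤ (c.toNNReal : ℝ) := NNReal.coe_le_coe.mpr key
    _ = c := Real.coe_toNNReal c hc

lemma gmean_norm_pow_le {n m : ℕ} (K : Fin m → Matrix (Fin n) (Fin n) ℝ)
    (hK : ∀ t i j, 0 ≤ K t i j) (α : Fin m → ℝ) (hα : ∀ t, 0 < α t)
    (hsum : ∑ t, α t = 1) (k : ℕ) :
    ‖(Matrix.of fun i j => ∏ t, (K t i j) ^ (α t)) ^ k‖ ≤ ∏ t, ‖K t ^ k‖ ^ α t := by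
  set G : Matrix (Fin n) (Fin n) ℝ := Matrix.of fun i j => ∏ t, (K t i j) ^ (α t) with hGdef
  have hGnn : ∀ i j, (0:ℝ) ≤ G i j := by
    intro i j
    simp only [hGdef, Matrix.of_apply]
    exact Finset.prod_nonneg fun t _ => Real.rpow_nonneg (hK t i j) _
  refine norm_le_of_rows _ _ (Finset.prod_nonneg fun t _ => Real.rpow_nonneg (norm_nonneg _) _)
    fun i => ?_
  calc ∑ j, |(G ^ k) i j| = ∑ j, (G ^ k) i j := by
        refine Finset.sum_congr rfl fun j _ => abs_of_nonneg (entry_nonneg_pow hGnn k i j)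
    _ ≤ ∑ j, ∏ t, ((K t ^ k) i j) ^ α t :=
        Finset.sum_le_sum fun j _ => entry_pow_le K hK α hα hsum k i j
    _ ≤ ∏ t, (∑ j, (K t ^ k) i j) ^ α t := by
        refine holder_aux Finset.univ Finset.univ (fun t j => (K t ^ k) i j)
          (fun t j => entry_nonneg_pow (hK t) k i j) α (fun t _ => hα t) ?_
        simpa using hsum
    _ ≤ ∏ t, ‖K t ^ k‖ ^ α t := by
        refine Finset.prod_le_prod (fun t _ => Real.rpow_nonneg
          (Finset.sum_nonneg fun j _ => entry_nonneg_pow (hK t) k i j) _) fun t _ => ?_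
        refine Real.rpow_le_rpow (Finset.sum_nonneg fun j _ => entry_nonneg_pow (hK t) k i j)
          ?_ (hα t).le
        refine le_trans (le_of_eq ?_) (rowsum_le_norm (K t ^ k) i)
        exact Finset.sum_congr rfl fun j _ => (abs_of_nonneg (entry_nonneg_pow (hK t) k i j)).symm

lemma map_pow_comm {n : ℕ} (A : Matrix (Fin n) (Fin n) ℝ) (k : ℕ) :
    (A.map (algebraMap ℝ ℂ)) ^ k = (A ^ k).map (algebraMap ℝ ℂ) := by
  rw [← RingHom.mapMatrix_apply, ← RingHom.mapMatrix_apply, map_pow]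

lemma nnnorm_map_eq {n : ℕ} (A : Matrix (Fin n) (Fin n) ℝ) :
    ‖A.map (algebraMap ℝ ℂ)‖₊ = ‖A‖₊ := by
  rw [Matrix.linfty_opNNNorm_def, Matrix.linfty_opNNNorm_def]
  congr 1
  funext i
  refine Finset.sum_congr rfl fun j _ => ?_
  simp [Matrix.map_apply]

theorem stmt0 {n m : ℕ} (K : Fin m → Matrix (Fin n) (Fin n) ℝ)
    (hK : ∀ t i j, 0 ≤ K t i j) (α : Fin m → ℝ) (hα : ∀ t, 0 < α t)
    (hsum : ∑ t, α t = 1) :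
    specRad (Matrix.of fun i j => ∏ t, (K t i j) ^ (α t)) ≤
      ∏ t, (specRad (K t)) ^ (α t) := by
  classical
  set G : Matrix (Fin n) (Fin n) ℝ := Matrix.of fun i j => ∏ t, (K t i j) ^ (α t) with hGdef
  -- finiteness of spectral radii
  have hfin : ∀ t, specRad (K t) ≠ ∞ := by
    intro t
    have h := spectrum.spectralRadius_le_pow_nnnorm_pow_one_div ℂ
      ((K t).map (algebraMap ℝ ℂ)) 0
    refine ne_top_of_le_ne_top ?_ h
    simp only [Nat.cast_zero, zero_add, one_div, inv_one, ENNReal.rpow_one]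
    exact ENNReal.mul_ne_top ENNReal.coe_ne_top ENNReal.coe_ne_top
  set s : Fin m → ℝ≥0 := fun t => (specRad (K t)).toNNReal with hsdef
  have hscoe : ∀ t, (s t : ℝ≥0∞) = specRad (K t) := fun t => ENNReal.coe_toNNReal (hfin t)
  set g : Fin m → ℕ → ℝ≥0 := fun t k => ‖K t ^ k‖₊ ^ (1/(k:ℝ)) with hgdef
  -- Gelfand
  have hgt : ∀ t, Tendsto (g t) atTop (𝓝 (s t)) := by
    intro t
    have h0 := spectrum.pow_nnnorm_pow_one_div_tendsto_nhds_spectralRadius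
      ((K t).map (algebraMap ℝ ℂ))
    have heq : ∀ k : ℕ, ((‖((K t).map (algebraMap ℝ ℂ)) ^ k‖₊ : ℝ≥0∞) ^ (1/(k:ℝ)))
        = ((g t k : ℝ≥0) : ℝ≥0∞) := by
      intro k
      rw [map_pow_comm, nnnorm_map_eq, hgdef]
      exact (ENNReal.coe_rpow_of_nonneg _ (by positivity)).symm
    rw [← ENNReal.tendsto_coe]
    have h1 : Tendsto (fun k : ℕ => ((g t k : ℝ≥0) : ℝ≥0∞)) atTop
        (𝓝 (spectralRadius ℂ ((K t).map (algebraMap ℝ ℂ)))) := by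
      refine h0.congr fun k => (heq k)
    rw [hscoe t]
    exact h1
  -- limit of products
  have hprod : Tendsto (fun k => ∏ t, (g t k) ^ (α t)) atTop (𝓝 (∏ t, s t ^ α t)) := by
    refine tendsto_finset_prod _ fun t _ => ?_
    exact (hgt t).nnrpow tendsto_const_nhds (Or.inr (hα t))
  -- per-k bound
  have hbound : ∀ k : ℕ, ((‖(G.map (algebraMap ℝ ℂ)) ^ k‖₊ : ℝ≥0∞) ^ (1/(k:ℝ)))
      ≤ ((∏ t, (g t k) ^ (α t) : ℝ≥0) : ℝ≥0∞) := by
    intro k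
    rw [map_pow_comm, nnnorm_map_eq, ← ENNReal.coe_rpow_of_nonneg _ (by positivity)]
    rw [ENNReal.coe_le_coe]
    have hnn : ‖G ^ k‖₊ ≤ ∏ t, ‖K t ^ k‖₊ ^ α t := by
      rw [← NNReal.coe_le_coe]
      push_cast [NNReal.coe_rpow]
      exact gmean_norm_pow_le K hK α hα hsum k
    calc ‖G ^ k‖₊ ^ (1/(k:ℝ)) ≤ (∏ t, ‖K t ^ k‖₊ ^ α t) ^ (1/(k:ℝ)) :=
          NNReal.rpow_le_rpow hnn (by positivity)
      _ = ∏ t, (‖K t ^ k‖₊ ^ α t) ^ (1/(k:ℝ)) := (NNReal.finset_prod_rpow _ _ _).symm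
      _ = ∏ t, (g t k) ^ (α t) := by
          refine Finset.prod_congr rfl fun t _ => ?_
          rw [hgdef, ← NNReal.rpow_mul, ← NNReal.rpow_mul, mul_comm]
  -- conclude
  have h1 : specRad G ≤ atTop.liminf
      (fun k : ℕ => (‖(G.map (algebraMap ℝ ℂ)) ^ k‖₊ : ℝ≥0∞) ^ (1/(k:ℝ))) :=
    spectrum.spectralRadius_le_liminf_pow_nnnorm_pow_one_div ℂ _
  have h2 : atTop.liminf
      (fun k : ℕ => (‖(G.map (algebraMap ℝ ℂ)) ^ k‖₊ : ℝ≥0∞) ^ (1/(k:ℝ)))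
      ≤ atTop.liminf (fun k : ℕ => ((∏ t, (g t k) ^ (α t) : ℝ≥0) : ℝ≥0∞)) :=
    Filter.liminf_le_liminf (Filter.Eventually.of_forall hbound)
  have h3 : atTop.liminf (fun k : ℕ => ((∏ t, (g t k) ^ (α t) : ℝ≥0) : ℝ≥0∞))
      = ((∏ t, s t ^ α t : ℝ≥0) : ℝ≥0∞) :=
    (ENNReal.tendsto_coe.mpr hprod).liminf_eq
  have h4 : (∏ t, (specRad (K t)) ^ (α t) : ℝ≥0∞) = ((∏ t, s t ^ α t : ℝ≥0) : ℝ≥0∞) := by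
    rw [ENNReal.coe_finset_prod]
    refine Finset.prod_congr rfl fun t _ => ?_
    rw [← hscoe t, ← ENNReal.coe_rpow_of_nonneg _ (hα t).le]
  rw [h4]
  exact h1.trans (h2.trans_eq h3)

end Aux
end

section
/- Let K₁₁, K₁₂, K₂₁, K₂₂ be nonnegative n×n matrices and α₁, α₂ > 0 with α₁ + α₂ = 1. Then entrywise (K₁₁^(α₁) ∘ K₁₂^(α₂))(K₂₁^(α₁) ∘ K₂₂^(α₂)) ≤ (K₁₁K₂₁)^(α₁) ∘ (K₁₂K₂₂)^(α₂). -/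
open scoped ENNReal
open Finset
/-! Each entry of `(A^(α) ∘ B^(β)) (C^(α) ∘ D^(β))` is a sum `∑ₖ xₖ^α yₖ^β` with
`xₖ = A i k * C k j` and `yₖ = B i k * D k j`, and Hölder's inequality with the conjugate
exponents `1/α`, `1/β` bounds it by `(∑ₖ xₖ)^α (∑ₖ yₖ)^β = (AC)ᵢⱼ^α (BD)ᵢⱼ^β`. -/

namespace Real

theorem sum_rpow_mul_rpow_le_of_nonneg {ι : Type*} (s : Finset ι) {f g : ι → ℝ}
    (hf : ∀ i ∈ s, 0 ≤ f i) (hg : ∀ i ∈ s, 0 ≤ g i) {α β : ℝ} (hα : 0 < α) (hβ : 0 < β)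
    (hαβ : α + β = 1) :
    ∑ i ∈ s, f i ^ α * g i ^ β ≤ (∑ i ∈ s, f i) ^ α * (∑ i ∈ s, g i) ^ β := by
  have holder := inner_le_Lp_mul_Lq_of_nonneg s (holderConjugate_one_div hα hβ hαβ)
    (fun i hi => rpow_nonneg (hf i hi) α) (fun i hi => rpow_nonneg (hg i hi) β)
  have cancel_f : ∀ i ∈ s, (f i ^ α) ^ (1 / α) = f i := fun i hi => by
    rw [← rpow_mul (hf i hi), mul_one_div_cancel hα.ne', rpow_one]
  have cancel_g : ∀ i ∈ s, (g i ^ β) ^ (1 / β) = g i := fun i hi => by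
    rw [← rpow_mul (hg i hi), mul_one_div_cancel hβ.ne', rpow_one]
  rwa [sum_congr rfl cancel_f, sum_congr rfl cancel_g, one_div_one_div, one_div_one_div]
    at holder

end Real

namespace Matrix

variable {l m n : Type*}

noncomputable def hadamardGeomMean (A B : Matrix m n ℝ) (α β : ℝ) : Matrix m n ℝ :=
  of fun i j => A i j ^ α * B i j ^ β

theorem hadamardGeomMean_mul_le [Fintype m] {A B : Matrix l m ℝ} {C D : Matrix m n ℝ}
    (hA : ∀ i j, 0 ≤ A i j) (hB : ∀ i j, 0 ≤ B i j) (hC : ∀ i j, 0 ≤ C i j)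
    (hD : ∀ i j, 0 ≤ D i j) {α β : ℝ} (hα : 0 < α) (hβ : 0 < β) (hαβ : α + β = 1) (i : l)
    (j : n) :
    (hadamardGeomMean A B α β * hadamardGeomMean C D α β) i j ≤
      (A * C) i j ^ α * (B * D) i j ^ β := by
  have entry_eq : ∀ k, hadamardGeomMean A B α β i k * hadamardGeomMean C D α β k j =
      (A i k * C k j) ^ α * (B i k * D k j) ^ β := fun k => by
    simp only [hadamardGeomMean, of_apply]
    rw [Real.mul_rpow (hA i k) (hC k j), Real.mul_rpow (hB i k) (hD k j)]
    ring
  simp only [mul_apply, entry_eq]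
  exact Real.sum_rpow_mul_rpow_le_of_nonneg _ (fun k _ => mul_nonneg (hA i k) (hC k j))
    (fun k _ => mul_nonneg (hB i k) (hD k j)) hα hβ hαβ

end Matrix

theorem stmt2 {n : ℕ} (K11 K12 K21 K22 : Matrix (Fin n) (Fin n) ℝ)
    (h11 : ∀ i j, 0 ≤ K11 i j) (h12 : ∀ i j, 0 ≤ K12 i j)
    (h21 : ∀ i j, 0 ≤ K21 i j) (h22 : ∀ i j, 0 ≤ K22 i j)
    (α₁ α₂ : ℝ) (hα₁ : 0 < α₁) (hα₂ : 0 < α₂) (hsum : α₁ + α₂ = 1) :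
    ∀ i j,
      ((Matrix.of fun i j => (K11 i j) ^ α₁ * (K12 i j) ^ α₂) *
        (Matrix.of fun i j => (K21 i j) ^ α₁ * (K22 i j) ^ α₂)) i j ≤
      ((K11 * K21) i j) ^ α₁ * ((K12 * K22) i j) ^ α₂ :=
  Matrix.hadamardGeomMean_mul_le h11 h12 h21 h22 hα₁ hα₂ hsum
end

section
/- For nonnegative n×n matrices K₁,…,K_m and t ≥ 1, the entrywise inequality K₁^(t) ⋯ K_m^(t) ≤ (K₁ ⋯ K_m)^(t) holds, where A^(t) denotes the matrix with entries A(i,j)^t. -/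
open scoped ENNReal
open Finset
/-!
For `p ≥ 1` the map `x ↦ x ^ p` is superadditive on `[0, ∞)` and multiplicative, so for
nonnegative matrices `∑ₖ A i k ^ p * B k j ^ p = ∑ₖ (A i k * B k j) ^ p ≤ ((A * B) i j) ^ p`.
Induction on the number of factors, using monotonicity of multiplication by a nonnegative
matrix, gives the inequality for any finite product.
-/

theorem Real.sum_rpow_le_rpow_sum {ι : Type*} (s : Finset ι) {f : ι → ℝ}
    (hf : ∀ i ∈ s, 0 ≤ f i) {p : ℝ} (hp : 1 ≤ p) :
    ∑ i ∈ s, f i ^ p ≤ (∑ i ∈ s, f i) ^ p :=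
  -- superadditivity of `x ↦ x ^ p` is subadditivity into the order dual
  Finset.le_sum_of_subadditive_on_pred (fun x => OrderDual.toDual (x ^ p)) (0 ≤ ·)
    (by simp [Real.zero_rpow (by linarith : p ≠ 0)])
    (fun _ _ hx hy => Real.add_rpow_le_rpow_add hx hy hp) (fun _ _ => add_nonneg) f hf

namespace Matrix

variable {l m n R : Type*}

section OrderedSemiring

variable [Semiring R] [PartialOrder R] [IsOrderedRing R]

theorem list_prod_apply_nonneg [Fintype n] [DecidableEq n] (L : List (Matrix n n R))
    (hL : ∀ A ∈ L, ∀ i j, 0 ≤ A i j) (i j : n) : 0 ≤ L.prod i j :=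
  List.prod_induction (fun M : Matrix n n R => ∀ i j, 0 ≤ M i j)
    (fun _ _ hA hB i j => Finset.sum_nonneg fun k _ => mul_nonneg (hA i k) (hB k j))
    (fun i j => by by_cases h : i = j <;> simp [one_apply, h]) hL i j

theorem mul_apply_le_mul_apply_of_nonneg [Fintype m] {A : Matrix l m R} {B C : Matrix m n R}
    (hA : ∀ i j, 0 ≤ A i j) (hBC : ∀ i j, B i j ≤ C i j) (i : l) (j : n) :
    (A * B) i j ≤ (A * C) i j :=
  Finset.sum_le_sum fun k _ => mul_le_mul_of_nonneg_left (hBC k j) (hA i k)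

end OrderedSemiring

theorem map_rpow_mul_map_rpow_apply_le [Fintype m] {A : Matrix l m ℝ} {B : Matrix m n ℝ}
    (hA : ∀ i j, 0 ≤ A i j) (hB : ∀ i j, 0 ≤ B i j) {p : ℝ} (hp : 1 ≤ p) (i : l) (j : n) :
    (A.map (· ^ p) * B.map (· ^ p)) i j ≤ (A * B) i j ^ p := by
  simp only [mul_apply, map_apply, ← Real.mul_rpow (hA i _) (hB _ j)]
  exact Real.sum_rpow_le_rpow_sum _ (fun k _ => mul_nonneg (hA i k) (hB k j)) hp

theorem list_prod_map_rpow_apply_le [Fintype n] [DecidableEq n] (L : List (Matrix n n ℝ))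
    (hL : ∀ A ∈ L, ∀ i j, 0 ≤ A i j) {p : ℝ} (hp : 1 ≤ p) (i j : n) :
    (L.map (·.map (· ^ p))).prod i j ≤ L.prod i j ^ p := by
  induction L generalizing i j with
  | nil =>
    rw [List.map_nil, List.prod_nil]
    have h_one : (1 : Matrix n n ℝ).map (· ^ p) = 1 :=
      Matrix.map_one _ (Real.zero_rpow (by linarith)) (Real.one_rpow p)
    exact (congrFun₂ h_one i j).ge
  | cons A L ih =>
    have hA : ∀ i j, 0 ≤ A i j := hL A List.mem_cons_self
    have hL' : ∀ B ∈ L, ∀ i j, 0 ≤ B i j := fun B hB => hL B (List.mem_cons_of_mem A hB)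
    rw [List.map_cons, List.prod_cons, List.prod_cons]
    calc (A.map (· ^ p) * (L.map (·.map (· ^ p))).prod) i j
        ≤ (A.map (· ^ p) * L.prod.map (· ^ p)) i j :=
          mul_apply_le_mul_apply_of_nonneg (fun i k => Real.rpow_nonneg (hA i k) p)
            (ih hL') i j
      _ ≤ (A * L.prod) i j ^ p :=
          map_rpow_mul_map_rpow_apply_le hA (list_prod_apply_nonneg L hL') hp i j

end Matrix

theorem stmt3 {n m : ℕ} (K : Fin m → Matrix (Fin n) (Fin n) ℝ)
    (hK : ∀ t i j, 0 ≤ K t i j) (t : ℝ) (ht : 1 ≤ t) :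
    ∀ i j,
      ((List.ofFn fun s => Matrix.of fun i j => (K s i j) ^ t).prod) i j ≤
        (((List.ofFn K).prod) i j) ^ t := by
  have hK' : ∀ A ∈ List.ofFn K, ∀ i j, 0 ≤ A i j := by
    simpa only [List.forall_mem_ofFn_iff] using hK
  have h := Matrix.list_prod_map_rpow_apply_le _ hK' ht
  rwa [List.map_ofFn] at h
end

section
/- Let K₁,…,K_m be nonnegative n×n matrices with equal off-diagonal parts, i.e., K_s(i,j) = K_t(i,j) for all i ≠ j and all s, t. Then for nonnegative α₁,…,α_m with ∑α_t = 1, r(α₁K₁ + ⋯ + α_mK_m) ≤ α₁ r(K₁) + ⋯ + α_m r(K_m). -/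
open scoped ENNReal
open Finset
/-!
For a nonnegative matrix, `r(M) ≤ c` holds as soon as some positive vector satisfies
`M x ≤ c x` (Collatz–Wielandt), and conversely `r(M) < c` yields such an `x` (a truncated
Neumann series, using Gelfand's formula). Given subinvariant vectors `K_t x_t ≤ c_t x_t`, the
weighted geometric mean `y = ∏ x_t ^ α_t` satisfies `(∑ α_t K_t) y ≤ (∑ α_t c_t) y`: on the
diagonal this is linear, and off the diagonal, where all `K_t` agree, Hölder's inequality bounds
the row by `∏ ((c_t - K_t i i) x_t i) ^ α_t`, which weighted AM–GM turns into
`(∑ α_t (c_t - K_t i i)) y_i`. Letting `c_t ↓ r(K_t)` gives the theorem.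
-/

open Matrix

theorem sum_prod_rpow_le_prod_sum_rpow {ι τ : Type*} [Fintype τ] (s : Finset ι)
    {w : τ → ℝ} (hw : ∀ t, 0 ≤ w t) (hw1 : ∑ t, w t = 1)
    {f : τ → ι → ℝ} (hf : ∀ t, ∀ j ∈ s, 0 ≤ f t j) :
    ∑ j ∈ s, ∏ t, f t j ^ w t ≤ ∏ t, (∑ j ∈ s, f t j) ^ w t := by
  set S : τ → ℝ := fun t => ∑ j ∈ s, f t j
  have hS : ∀ t, 0 ≤ S t := fun t => sum_nonneg (hf t)
  have hsplit : ∀ j ∈ s, ∏ t, f t j ^ w t = (∏ t, (f t j / S t) ^ w t) * ∏ t, S t ^ w t := by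
    intro j hj
    rw [← prod_mul_distrib]
    refine prod_congr rfl fun t _ => ?_
    rw [Real.div_rpow (hf t j hj) (hS t), div_mul_cancel_of_imp]
    -- if `S t ^ w t = 0` then `S t = 0`, so the whole `t`-th row of `f` vanishes on `s`
    intro h
    obtain ⟨hS0, hw0⟩ := (Real.rpow_eq_zero_iff_of_nonneg (hS t)).mp h
    rw [(sum_eq_zero_iff_of_nonneg (hf t)).mp hS0 j hj, Real.zero_rpow hw0]
  have hweights : ∑ t, w t * (S t / S t) ≤ 1 :=
    hw1 ▸ sum_le_sum fun t _ => mul_le_of_le_one_right (hw t) (div_self_le_one _)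
  calc ∑ j ∈ s, ∏ t, f t j ^ w t
      ≤ ∑ j ∈ s, (∑ t, w t * (f t j / S t)) * ∏ t, S t ^ w t := by
        refine sum_le_sum fun j hj => (hsplit j hj).trans_le ?_
        gcongr
        · exact prod_nonneg fun t _ => Real.rpow_nonneg (hS t) _
        · exact Real.geom_mean_le_arith_mean_weighted _ _ _ (fun t _ => hw t) hw1
            fun t _ => div_nonneg (hf t j hj) (hS t)
    _ = (∑ t, w t * (S t / S t)) * ∏ t, S t ^ w t := by
        simp only [← sum_mul, S, sum_div, mul_sum]
        rw [sum_comm]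
    _ ≤ ∏ t, S t ^ w t :=
        mul_le_of_le_one_left (prod_nonneg fun t _ => Real.rpow_nonneg (hS t) _) hweights

variable {ι τ : Type*} [Fintype ι]

theorem norm_le_of_mulVec_eq_smul {M : Matrix ι ι ℝ} (hM : ∀ i j, 0 ≤ M i j)
    {x : ι → ℝ} (hx : ∀ i, 0 < x i) {c : ℝ} (hMx : ∀ i, (M *ᵥ x) i ≤ c * x i)
    {μ : ℂ} {v : ι → ℂ} (hv : v ≠ 0) (hμ : M.map (algebraMap ℝ ℂ) *ᵥ v = μ • v) :
    ‖μ‖ ≤ c := by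
  obtain ⟨j₀, hj₀⟩ := Function.ne_iff.mp hv
  obtain ⟨i, -, hi⟩ := exists_max_image univ (fun j => ‖v j‖ / x j) ⟨j₀, mem_univ j₀⟩
  set ρ := ‖v i‖ / x i
  have hvj : ∀ j, ‖v j‖ ≤ ρ * x j := fun j =>
    (div_le_iff₀ (hx j)).mp (hi j (mem_univ j))
  have hρ : 0 < ρ := (div_pos (norm_pos_iff.mpr hj₀) (hx j₀)).trans_le (hi j₀ (mem_univ j₀))
  have hvi : 0 < ‖v i‖ := by simpa [ρ, div_pos_iff_of_pos_right (hx i)] using hρ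
  have hrow : μ * v i = ∑ j, (M i j : ℂ) * v j := by
    simpa [mulVec, dotProduct] using (congrFun hμ i).symm
  refine le_of_mul_le_mul_right ?_ hvi
  calc ‖μ‖ * ‖v i‖ = ‖∑ j, (M i j : ℂ) * v j‖ := by rw [← norm_mul, hrow]
    _ ≤ ∑ j, M i j * ‖v j‖ := by
        refine (norm_sum_le _ _).trans_eq (sum_congr rfl fun j _ => ?_)
        rw [norm_mul, Complex.norm_real, Real.norm_of_nonneg (hM i j)]
    _ ≤ ∑ j, M i j * (ρ * x j) :=
        sum_le_sum fun j _ => mul_le_mul_of_nonneg_left (hvj j) (hM i j)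
    _ = ρ * (M *ᵥ x) i := by
        simp only [mulVec, dotProduct, mul_sum]
        exact sum_congr rfl fun j _ => by ring
    _ ≤ ρ * (c * x i) := mul_le_mul_of_nonneg_left (hMx i) hρ.le
    _ = c * ‖v i‖ := by
        simp only [ρ]
        field_simp [(hx i).ne']

variable [DecidableEq ι] [Fintype τ]

theorem spectralRadius_map_le_of_mulVec_le {M : Matrix ι ι ℝ} (hM : ∀ i j, 0 ≤ M i j)
    {x : ι → ℝ} (hx : ∀ i, 0 < x i) {c : ℝ} (hMx : ∀ i, (M *ᵥ x) i ≤ c * x i) :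
    spectralRadius ℂ (M.map (algebraMap ℝ ℂ)) ≤ ENNReal.ofReal c := by
  refine iSup₂_le fun μ hμ => ?_
  rw [← spectrum_toLin', ← Module.End.hasEigenvalue_iff_mem_spectrum] at hμ
  obtain ⟨v, hv⟩ := hμ.exists_hasEigenvector
  rw [← enorm_eq_nnnorm, ← ofReal_norm]
  exact ENNReal.ofReal_le_ofReal <| norm_le_of_mulVec_eq_smul hM hx hMx hv.2
    (by rw [← toLin'_apply, hv.apply_eq_smul])

theorem spectralRadius_ne_top {R : Type*} [NormedField R] (A : Matrix ι ι R) :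
    spectralRadius R A ≠ ⊤ := by
  obtain ⟨C, hC⟩ := ((Matrix.finite_spectrum A).image (‖·‖₊)).bddAbove
  exact ne_top_of_le_ne_top ENNReal.coe_ne_top
    (iSup₂_le fun k hk => ENNReal.coe_le_coe.2 (hC ⟨k, hk, rfl⟩))

theorem spectrum.exists_norm_pow_lt_of_spectralRadius_lt {A : Type*} [NormedRing A]
    [NormedAlgebra ℂ A] [CompleteSpace A] (a : A) {c : ℝ}
    (h : spectralRadius ℂ a < ENNReal.ofReal c) : ∃ N, 0 < N ∧ ‖a ^ N‖ < c ^ N := by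
  have hc : 0 < c := ENNReal.ofReal_pos.mp (h.trans_le' bot_le)
  obtain ⟨N, hN, hN0⟩ := ((spectrum.pow_nnnorm_pow_one_div_tendsto_nhds_spectralRadius a
    |>.eventually_lt_const h).and (Filter.eventually_gt_atTop 0)).exists
  refine ⟨N, hN0, ?_⟩
  have hNpos : (0 : ℝ) < N := by exact_mod_cast hN0
  have := ENNReal.rpow_lt_rpow hN hNpos
  rw [← ENNReal.rpow_mul, one_div_mul_cancel hNpos.ne', ENNReal.rpow_one, ENNReal.rpow_natCast,
    ← ENNReal.ofReal_pow hc.le, ← enorm_eq_nnnorm, ← ofReal_norm] at this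
  exact (ENNReal.ofReal_lt_ofReal_iff (by positivity)).mp this

section
attribute [local instance] Matrix.linftyOpNormedRing Matrix.linftyOpNormedAlgebra

theorem exists_sum_pow_apply_lt {M : Matrix ι ι ℝ} (hM : ∀ i j, 0 ≤ M i j) {c : ℝ}
    (h : spectralRadius ℂ (M.map (algebraMap ℝ ℂ)) < ENNReal.ofReal c) :
    ∃ N, 0 < N ∧ ∀ i, ∑ j, (M ^ N) i j < c ^ N := by
  obtain ⟨N, hN0, hN⟩ := spectrum.exists_norm_pow_lt_of_spectralRadius_lt _ h
  refine ⟨N, hN0, fun i => lt_of_le_of_lt ?_ hN⟩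
  have hrow : ∑ j, ‖(M.map (algebraMap ℝ ℂ) ^ N) i j‖₊ ≤ ‖M.map (algebraMap ℝ ℂ) ^ N‖₊ := by
    rw [linfty_opNNNorm_def]
    exact le_sup (f := fun i => ∑ j, ‖(M.map (algebraMap ℝ ℂ) ^ N) i j‖₊) (mem_univ i)
  rw [← (algebraMap ℝ ℂ).mapMatrix_apply, ← map_pow, RingHom.mapMatrix_apply] at hrow ⊢
  refine le_of_eq_of_le ?_ (NNReal.coe_le_coe.mpr hrow)
  push_cast
  refine sum_congr rfl fun j _ => ?_
  rw [map_apply, Complex.coe_algebraMap, Complex.norm_real,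
    Real.norm_of_nonneg (pow_apply_nonneg hM N i j)]
end

theorem exists_pos_mulVec_le_of_sum_pow_apply_le {M : Matrix ι ι ℝ} (hM : ∀ i j, 0 ≤ M i j)
    {c : ℝ} (hc : 0 < c) {N : ℕ} (hN : 0 < N) (hrow : ∀ i, ∑ j, (M ^ N) i j ≤ c ^ N) :
    ∃ x : ι → ℝ, (∀ i, 0 < x i) ∧ ∀ i, (M *ᵥ x) i ≤ c * x i := by
  set v : ℕ → ι → ℝ := fun k => c⁻¹ ^ k • (M ^ k *ᵥ fun _ => 1)
  have hv_nonneg : ∀ k i, 0 ≤ v k i := fun k i =>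
    mul_nonneg (by positivity) <|
      sum_nonneg fun j _ => mul_nonneg (pow_apply_nonneg hM k i j) zero_le_one
  have hv_zero : v 0 = fun _ => 1 := by simp [v]
  have hv_le : ∀ i, v N i ≤ v 0 i := fun i => by
    have : (M ^ N *ᵥ fun _ => 1) i = ∑ j, (M ^ N) i j := by simp [mulVec, dotProduct]
    rw [hv_zero]
    simp only [v, Pi.smul_apply, smul_eq_mul, this, inv_pow]
    exact inv_mul_le_one_of_le₀ (hrow i) (by positivity)
  have hMv : ∀ k, M *ᵥ v k = c • v (k + 1) := fun k => by
    simp only [v, mulVec_smul, mulVec_mulVec, ← pow_succ', smul_smul, pow_succ]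
    rw [mul_comm c, mul_assoc, inv_mul_cancel₀ hc.ne', mul_one]
  refine ⟨∑ k ∈ range N, v k, fun i => ?_, fun i => ?_⟩
  · rw [Finset.sum_apply]
    exact zero_lt_one.trans_le <| (congrFun hv_zero i).symm.trans_le <|
      single_le_sum (fun k _ => hv_nonneg k i) (mem_range.mpr hN)
  · -- the sum telescopes: `c x - M x = c (v 0 - v N)`
    have htel : c • ∑ k ∈ range N, v k - M *ᵥ ∑ k ∈ range N, v k = c • (v 0 - v N) := by
      simp only [mulVec_sum, hMv, ← smul_sum, ← smul_sub, ← sum_sub_distrib, sum_range_sub']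
    have := congrFun htel i
    simp only [Pi.sub_apply, Pi.smul_apply, smul_eq_mul] at this
    nlinarith [hv_le i]

theorem exists_pos_mulVec_le_of_spectralRadius_lt {M : Matrix ι ι ℝ} (hM : ∀ i j, 0 ≤ M i j)
    {c : ℝ} (h : spectralRadius ℂ (M.map (algebraMap ℝ ℂ)) < ENNReal.ofReal c) :
    ∃ x : ι → ℝ, (∀ i, 0 < x i) ∧ ∀ i, (M *ᵥ x) i ≤ c * x i := by
  obtain ⟨N, hN, hrow⟩ := exists_sum_pow_apply_lt hM h
  exact exists_pos_mulVec_le_of_sum_pow_apply_le hM (ENNReal.ofReal_pos.mp (h.trans_le' bot_le))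
    hN fun i => (hrow i).le

theorem sum_smul_mulVec_prod_rpow_le {K : τ → Matrix ι ι ℝ}
    (hK : ∀ t i j, i ≠ j → 0 ≤ K t i j) (hoff : ∀ s t i j, i ≠ j → K s i j = K t i j)
    {α : τ → ℝ} (hα : ∀ t, 0 ≤ α t) (hsum : ∑ t, α t = 1)
    {x : τ → ι → ℝ} (hx : ∀ t i, 0 < x t i) {c : τ → ℝ}
    (hKx : ∀ t i, (K t *ᵥ x t) i ≤ c t * x t i)
    (i : ι) :
    ((∑ t, α t • K t) *ᵥ fun j => ∏ t, x t j ^ α t) i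
      ≤ (∑ t, α t * c t) * ∏ t, x t i ^ α t := by
  set y : ι → ℝ := fun j => ∏ t, x t j ^ α t
  have hy : 0 ≤ y i := prod_nonneg fun t _ => (Real.rpow_pos_of_pos (hx t i) _).le
  set O : τ → ℝ := fun t => ∑ j ∈ univ.erase i, K t i j * x t j
  have hO_nonneg : ∀ t, 0 ≤ O t := fun t => sum_nonneg fun j hj =>
    mul_nonneg (hK t i j (ne_of_mem_erase hj).symm) (hx t j).le
  have hO_le : ∀ t, O t ≤ (c t - K t i i) * x t i := fun t => by
    have := hKx t i
    rw [mulVec, dotProduct, ← add_sum_erase _ _ (mem_univ i)] at this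
    linarith
  have hgap : ∀ t, 0 ≤ c t - K t i i := fun t =>
    nonneg_of_mul_nonneg_left ((hO_nonneg t).trans (hO_le t)) (hx t i)
  have hentry : ∀ j, (∑ t, α t • K t) i j = ∑ t, α t * K t i j := fun j => by
    simp [Matrix.sum_apply]
  -- off the diagonal all `K t` agree, so the weighted geometric mean factorizes through `y`
  have hoffdiag : ∀ j ∈ univ.erase i,
      (∑ t, α t • K t) i j * y j = ∏ t, (K t i j * x t j) ^ α t := fun j hj => by
    have hji := (ne_of_mem_erase hj).symm
    have hKa : ∀ t, K t i j = (∑ s, α s • K s) i j := fun t => by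
      rw [hentry, sum_congr rfl fun s _ => by rw [hoff s t i j hji], ← sum_mul, hsum, one_mul]
    have ha : 0 ≤ (∑ s, α s • K s) i j := by
      rw [hentry]; exact sum_nonneg fun t _ => mul_nonneg (hα t) (hK t i j hji)
    generalize (∑ s, α s • K s) i j = a at hKa ha ⊢
    simp only [hKa, Real.mul_rpow ha (hx _ j).le, prod_mul_distrib,
      ← Real.rpow_sum_of_nonneg ha fun t _ => hα t, hsum, Real.rpow_one, y]
  calc ((∑ t, α t • K t) *ᵥ y) i
      = (∑ t, α t * K t i i) * y i + ∑ j ∈ univ.erase i, ∏ t, (K t i j * x t j) ^ α t := by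
        rw [mulVec, dotProduct, ← add_sum_erase _ _ (mem_univ i), hentry, sum_congr rfl hoffdiag]
    _ ≤ (∑ t, α t * K t i i) * y i + ∏ t, O t ^ α t := by
        gcongr
        exact sum_prod_rpow_le_prod_sum_rpow _ hα hsum fun t j hj =>
          mul_nonneg (hK t i j (ne_of_mem_erase hj).symm) (hx t j).le
    _ ≤ (∑ t, α t * K t i i) * y i + (∏ t, (c t - K t i i) ^ α t) * y i := by
        rw [← prod_mul_distrib]
        gcongr with t
        · exact fun t _ => Real.rpow_nonneg (hO_nonneg t) _
        rw [← Real.mul_rpow (hgap t) (hx t i).le]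
        exact Real.rpow_le_rpow (hO_nonneg t) (hO_le t) (hα t)
    _ ≤ (∑ t, α t * K t i i) * y i + (∑ t, α t * (c t - K t i i)) * y i := by
        gcongr
        exact Real.geom_mean_le_arith_mean_weighted _ _ _ (fun t _ => hα t) hsum
          fun t _ => hgap t
    _ = (∑ t, α t * c t) * y i := by
        rw [← add_mul, ← sum_add_distrib]
        simp only [mul_sub, add_sub_cancel]

theorem spectralRadius_sum_smul_le_of_lt {K : τ → Matrix ι ι ℝ} (hK : ∀ t i j, 0 ≤ K t i j)
    (hoff : ∀ s t i j, i ≠ j → K s i j = K t i j)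
    {α : τ → ℝ} (hα : ∀ t, 0 ≤ α t) (hsum : ∑ t, α t = 1) {c : τ → ℝ}
    (hc : ∀ t, spectralRadius ℂ ((K t).map (algebraMap ℝ ℂ)) < ENNReal.ofReal (c t)) :
    spectralRadius ℂ ((∑ t, α t • K t).map (algebraMap ℝ ℂ)) ≤
      ENNReal.ofReal (∑ t, α t * c t) := by
  choose x hx hKx using fun t => exists_pos_mulVec_le_of_spectralRadius_lt (hK t) (hc t)
  refine spectralRadius_map_le_of_mulVec_le (fun i j => ?_)
    (fun i => prod_pos fun t _ => Real.rpow_pos_of_pos (hx t i) _)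
    (sum_smul_mulVec_prod_rpow_le (fun t i j _ => hK t i j) hoff hα hsum hx hKx)
  simpa [Matrix.sum_apply] using sum_nonneg fun t _ => mul_nonneg (hα t) (hK t i j)

theorem stmt6 {n m : ℕ} (K : Fin m → Matrix (Fin n) (Fin n) ℝ)
    (hK : ∀ t i j, 0 ≤ K t i j)
    (hoff : ∀ s t : Fin m, ∀ i j : Fin n, i ≠ j → K s i j = K t i j)
    (α : Fin m → ℝ) (hα : ∀ t, 0 ≤ α t) (hsum : ∑ t, α t = 1) :
    specRad (∑ t, α t • K t) ≤ ∑ t, ENNReal.ofReal (α t) * specRad (K t) := by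
  have hfin : ∀ t, specRad (K t) ≠ ⊤ := fun t => spectralRadius_ne_top _
  refine ENNReal.le_of_forall_pos_le_add fun ε hε _ => ?_
  have hterm : ∀ t, 0 ≤ α t * (specRad (K t)).toReal := fun t =>
    mul_nonneg (hα t) ENNReal.toReal_nonneg
  calc specRad (∑ t, α t • K t)
      ≤ ENNReal.ofReal (∑ t, α t * ((specRad (K t)).toReal + ε)) :=
        spectralRadius_sum_smul_le_of_lt hK hoff hα hsum fun t =>
          (ENNReal.lt_ofReal_iff_toReal_lt (hfin t)).mpr (lt_add_of_pos_right _ hε)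
    _ = ∑ t, ENNReal.ofReal (α t) * specRad (K t) + ε := by
        simp only [mul_add, sum_add_distrib, ← sum_mul, hsum, one_mul]
        rw [ENNReal.ofReal_add (sum_nonneg fun t _ => hterm t) ε.coe_nonneg,
          ENNReal.ofReal_sum_of_nonneg fun t _ => hterm t, ENNReal.ofReal_coe_nnreal]
        simp only [ENNReal.ofReal_mul (hα _), ENNReal.ofReal_toReal (hfin _)]
end

section
/- Let K be an n×n real matrix and D₁,…,D_m diagonal real matrices such that K + D_t is entrywise nonnegative for each t. Then for nonnegative α₁,…,α_m summing to 1, r(α₁(K+D₁) + ⋯ + α_m(K+D_m)) ≤ α₁ r(K+D₁) + ⋯ + α_m r(K+D_m). -/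
open scoped ENNReal
open Finset
/-!
For a nonnegative matrix `A` and real `c`, `r(A) ≤ c` as soon as some positive vector satisfies
`A x ≤ c x` (compare `x` with `|v|` for an eigenvector `v`), and conversely `r(A) < c` yields such
an `x` (a truncated Neumann series). Given positive `x_t` with `(K + D_t) x_t ≤ c_t x_t`, the
weighted geometric mean `x = ∏ x_t ^ α_t` satisfies `(∑ α_t (K + D_t)) x ≤ (∑ α_t c_t) x`: the
diagonal entries combine linearly, and off the diagonal all `K + D_t` agree with `K ≥ 0`, so
weighted AM–GM applies to the ratios `x_t j / x_t i`. Letting `c_t` decrease to `r(K + D_t)`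
gives the claim.
-/

open scoped NNReal

lemma spectrum.exists_pow_norm_lt_of_spectralRadius_lt {A : Type*} [NormedRing A]
    [NormedAlgebra ℂ A] [CompleteSpace A] {a : A} {c : ℝ}
    (h : spectralRadius ℂ a < ENNReal.ofReal c) : ∃ N, 0 < N ∧ ‖a ^ N‖ < c ^ N := by
  have hc : 0 ≤ c := by
    by_contra! hc
    simp [ENNReal.ofReal_of_nonpos hc.le] at h
  obtain ⟨N, hlt, hN⟩ := ((pow_nnnorm_pow_one_div_tendsto_nhds_spectralRadius a).eventually_lt_const
    h |>.and (Filter.eventually_gt_atTop 0)).exists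
  refine ⟨N, hN, ?_⟩
  have hN' : (0 : ℝ) < N := Nat.cast_pos.mpr hN
  have := ENNReal.rpow_lt_rpow hlt hN'
  rw [← ENNReal.rpow_mul, one_div_mul_cancel hN'.ne', ENNReal.rpow_one, ENNReal.rpow_natCast,
    ← ENNReal.ofReal_pow hc, ← enorm_eq_nnnorm, ← ofReal_norm] at this
  exact (ENNReal.ofReal_lt_ofReal_iff_of_nonneg (norm_nonneg _)).mp this

namespace Matrix

variable {ι τ : Type*}

section Subinvariance

variable [Fintype ι]

lemma exists_nonneg_ne_zero_norm_smul_le_mulVec [DecidableEq ι] {A : Matrix ι ι ℝ}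
    (hA : ∀ i j, 0 ≤ A i j) {μ : ℂ} (hμ : μ ∈ spectrum ℂ (A.map (algebraMap ℝ ℂ))) :
    ∃ w : ι → ℝ, 0 ≤ w ∧ w ≠ 0 ∧ ‖μ‖ • w ≤ A *ᵥ w := by
  rw [← spectrum_toLin', ← Module.End.hasEigenvalue_iff_mem_spectrum] at hμ
  obtain ⟨v, hv⟩ := hμ.exists_hasEigenvector
  have hAv : A.map (algebraMap ℝ ℂ) *ᵥ v = μ • v := by
    simpa [toLin'_apply] using hv.apply_eq_smul
  refine ⟨fun i => ‖v i‖, fun i => norm_nonneg _, fun h => hv.2 ?_, fun i => ?_⟩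
  · ext i
    simpa using congrFun h i
  calc ‖μ‖ * ‖v i‖ = ‖∑ j, A i j * v j‖ := by
        simpa [mulVec, dotProduct] using congrArg (‖· i‖) hAv.symm
    _ ≤ ∑ j, ‖(A i j : ℂ) * v j‖ := norm_sum_le _ _
    _ = (A *ᵥ fun i => ‖v i‖) i := by
        simp [mulVec, dotProduct, Complex.norm_real, abs_of_nonneg (hA _ _)]

lemma le_of_smul_le_mulVec_of_mulVec_le {A : Matrix ι ι ℝ} (hA : ∀ i j, 0 ≤ A i j)
    {x : ι → ℝ} (hx : ∀ i, 0 < x i) {c : ℝ} (hAx : A *ᵥ x ≤ c • x)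
    {w : ι → ℝ} (hw : 0 ≤ w) (hw0 : w ≠ 0) {l : ℝ} (hAw : l • w ≤ A *ᵥ w) : l ≤ c := by
  obtain ⟨i₀, hi₀⟩ : ∃ i, w i ≠ 0 := Function.ne_iff.mp hw0
  obtain ⟨i, -, hi⟩ := exists_max_image univ (fun i => w i / x i) ⟨i₀, mem_univ _⟩
  set s := w i / x i
  have hs : 0 < s := ((div_pos ((hw i₀).lt_of_ne' hi₀) (hx i₀))).trans_le (hi i₀ (mem_univ _))
  have hws : w ≤ s • x := fun j => (div_le_iff₀ (hx j)).mp (hi j (mem_univ _))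
  have hwi : w i = s * x i := (div_mul_cancel₀ _ (hx i).ne').symm
  have : l * (s * x i) ≤ c * (s * x i) :=
    calc l * (s * x i) = (l • w) i := by simp [hwi]
      _ ≤ (A *ᵥ w) i := hAw i
      _ ≤ (A *ᵥ (s • x)) i := sum_le_sum fun j _ => mul_le_mul_of_nonneg_left (hws j) (hA i j)
      _ = s * (A *ᵥ x) i := by simp [mulVec_smul]
      _ ≤ s * (c * x i) := mul_le_mul_of_nonneg_left (hAx i) hs.le
      _ = c * (s * x i) := by ring
  exact le_of_mul_le_mul_right this (mul_pos hs (hx i))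

lemma spectralRadius_le_of_mulVec_le [DecidableEq ι] {A : Matrix ι ι ℝ} (hA : ∀ i j, 0 ≤ A i j)
    {x : ι → ℝ} (hx : ∀ i, 0 < x i) {c : ℝ} (hAx : A *ᵥ x ≤ c • x) :
    spectralRadius ℂ (A.map (algebraMap ℝ ℂ)) ≤ ENNReal.ofReal c := by
  refine iSup₂_le fun μ hμ => ?_
  obtain ⟨w, hw, hw0, hAw⟩ := exists_nonneg_ne_zero_norm_smul_le_mulVec hA hμ
  rw [← enorm_eq_nnnorm, ← ofReal_norm]
  exact ENNReal.ofReal_le_ofReal (le_of_smul_le_mulVec_of_mulVec_le hA hx hAx hw hw0 hAw)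

lemma spectralRadius_ne_top_of_nonneg [DecidableEq ι] {A : Matrix ι ι ℝ}
    (hA : ∀ i j, 0 ≤ A i j) : spectralRadius ℂ (A.map (algebraMap ℝ ℂ)) ≠ ⊤ := by
  refine ne_top_of_le_ne_top ENNReal.ofReal_ne_top
    (spectralRadius_le_of_mulVec_le hA (x := 1) (c := ∑ i, ∑ j, A i j) (fun _ => one_pos) ?_)
  intro i
  simpa [mulVec, dotProduct] using
    single_le_sum (f := fun i => ∑ j, A i j) (fun i _ => sum_nonneg fun j _ => hA i j) (mem_univ i)

end Subinvariance

section NeumannSeries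

variable [Fintype ι] [DecidableEq ι]

lemma exists_pos_mulVec_le_self_of_pow_mulVec_le {B : Matrix ι ι ℝ} (hB : ∀ i j, 0 ≤ B i j)
    {N : ℕ} (hN : 0 < N) (hBN : B ^ N *ᵥ 1 ≤ 1) : ∃ x : ι → ℝ, (∀ i, 0 < x i) ∧ B *ᵥ x ≤ x := by
  set G := ∑ k ∈ range N, B ^ k
  have hG : B * G = G + (B ^ N - 1) := by
    rw [← mul_geom_sum, sub_mul, one_mul, add_sub_cancel]
  refine ⟨G *ᵥ 1, fun i => ?_, ?_⟩
  · have hG1 : 1 ≤ G *ᵥ 1 := by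
      rw [sum_mulVec]
      simpa using single_le_sum (f := fun k => B ^ k *ᵥ (1 : ι → ℝ))
        (fun k _ i => sum_nonneg fun j _ => mul_nonneg (pow_apply_nonneg hB k i j) zero_le_one)
        (mem_range.mpr hN)
    exact one_pos.trans_le (hG1 i)
  · rw [mulVec_mulVec, hG, add_mulVec, sub_mulVec, one_mulVec]
    simpa using hBN

attribute [local instance] Matrix.linftyOpNormedRing Matrix.linftyOpNormedAlgebra

/-- Truncated Neumann series: `x = ∑_{k < N} c⁻ᵏ Aᵏ 1`, where `N` is taken from Gelfand's formula
so that the row sums of `Aᴺ` are below `cᴺ`. -/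
lemma exists_pos_mulVec_le_of_spectralRadius_lt {A : Matrix ι ι ℝ} (hA : ∀ i j, 0 ≤ A i j)
    {c : ℝ} (hc : spectralRadius ℂ (A.map (algebraMap ℝ ℂ)) < ENNReal.ofReal c) :
    ∃ x : ι → ℝ, (∀ i, 0 < x i) ∧ A *ᵥ x ≤ c • x := by
  have hc0 : 0 < c := ENNReal.ofReal_pos.mp (pos_of_gt hc)
  have : CompleteSpace (Matrix ι ι ℂ) := FiniteDimensional.complete ℂ _
  obtain ⟨N, hN, hnorm⟩ := spectrum.exists_pow_norm_lt_of_spectralRadius_lt hc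
  have hrow : A ^ N *ᵥ 1 ≤ c ^ N • 1 := fun i => by
    have hsum : ∑ j, (A ^ N) i j = ((∑ j, ‖(A ^ N).map (algebraMap ℝ ℂ) i j‖₊ : ℝ≥0) : ℝ) := by
      push_cast
      refine sum_congr rfl fun j _ => ?_
      simp [Complex.norm_real, abs_of_nonneg (pow_apply_nonneg hA N i j)]
    have : ∑ j, (A ^ N) i j ≤ ‖(A ^ N).map (algebraMap ℝ ℂ)‖ := by
      rw [linfty_opNorm_def, hsum, NNReal.coe_le_coe]
      exact le_sup (f := fun i => ∑ j, ‖(A ^ N).map (algebraMap ℝ ℂ) i j‖₊) (mem_univ i)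
    rw [Matrix.map_pow] at this
    simpa [mulVec, dotProduct] using this.trans hnorm.le
  obtain ⟨x, hx, hBx⟩ := exists_pos_mulVec_le_self_of_pow_mulVec_le (B := c⁻¹ • A)
    (fun i j => smul_nonneg (inv_nonneg.mpr hc0.le) (hA i j)) hN fun i => by
      rw [smul_pow, smul_mulVec, Pi.smul_apply, smul_eq_mul, inv_pow, Pi.one_apply,
        inv_mul_le_one₀ (pow_pos hc0 N)]
      simpa using hrow i
  refine ⟨x, hx, fun i => ?_⟩
  have := hBx i
  rwa [smul_mulVec, Pi.smul_apply, smul_eq_mul, inv_mul_le_iff₀ hc0] at this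

end NeumannSeries

section DiagonalPerturbation

variable [Fintype τ] {K : Matrix ι ι ℝ} {D : τ → Matrix ι ι ℝ} {α : τ → ℝ} {x : τ → ι → ℝ}

lemma sum_smul_add_apply_mul_prod_rpow_le (hD : ∀ t, (D t).IsDiag)
    (hK : ∀ i j, i ≠ j → 0 ≤ K i j) (hα : ∀ t, 0 ≤ α t) (hsum : ∑ t, α t = 1)
    (hx : ∀ t i, 0 < x t i) (i j : ι) :
    (∑ t, α t • (K + D t)) i j * ∏ t, x t j ^ α t ≤
      (∑ t, α t * ((K + D t) i j * x t j / x t i)) * ∏ t, x t i ^ α t := by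
  have hS : (∑ t, α t • (K + D t)) i j = ∑ t, α t * (K + D t) i j := by
    simp only [Matrix.sum_apply, smul_apply, smul_eq_mul]
  rcases eq_or_ne i j with rfl | hij
  · rw [hS]
    exact le_of_eq <| congrArg (· * _) <| sum_congr rfl fun t _ => by
      rw [mul_div_assoc, div_self (hx t i).ne', mul_one]
  have hKD : ∀ t, (K + D t) i j = K i j := fun t => by simp [hD t hij]
  have hratio : ∀ t, 0 ≤ x t j / x t i := fun t => (div_pos (hx t j) (hx t i)).le
  have hgm : ∏ t, x t j ^ α t = (∏ t, (x t j / x t i) ^ α t) * ∏ t, x t i ^ α t := by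
    rw [← prod_mul_distrib]
    refine prod_congr rfl fun t _ => ?_
    rw [← Real.mul_rpow (hratio t) (hx t i).le, div_mul_cancel₀ _ (hx t i).ne']
  have hamgm : ∏ t, (x t j / x t i) ^ α t ≤ ∑ t, α t * (x t j / x t i) :=
    Real.geom_mean_le_arith_mean_weighted univ α _ (fun t _ => hα t) hsum fun t _ => hratio t
  calc (∑ t, α t • (K + D t)) i j * ∏ t, x t j ^ α t
      = K i j * (∏ t, (x t j / x t i) ^ α t) * ∏ t, x t i ^ α t := by
        rw [hS, hgm]
        simp only [hKD, ← sum_mul, hsum, one_mul, mul_assoc]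
    _ ≤ K i j * (∑ t, α t * (x t j / x t i)) * ∏ t, x t i ^ α t := by
        have hy : 0 ≤ ∏ t, x t i ^ α t := prod_nonneg fun t _ => Real.rpow_nonneg (hx t i).le _
        exact mul_le_mul_of_nonneg_right (mul_le_mul_of_nonneg_left hamgm (hK i j hij)) hy
    _ = (∑ t, α t * ((K + D t) i j * x t j / x t i)) * ∏ t, x t i ^ α t := by
        simp only [hKD, mul_sum]
        congr 1
        exact sum_congr rfl fun t _ => by ring

lemma sum_smul_add_mulVec_prod_rpow_le [Fintype ι] (hD : ∀ t, (D t).IsDiag)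
    (hK : ∀ i j, i ≠ j → 0 ≤ K i j) (hα : ∀ t, 0 ≤ α t) (hsum : ∑ t, α t = 1)
    (hx : ∀ t i, 0 < x t i) {c : τ → ℝ} (hc : ∀ t, (K + D t) *ᵥ x t ≤ c t • x t) :
    (∑ t, α t • (K + D t)) *ᵥ (fun i => ∏ t, x t i ^ α t) ≤
      (∑ t, α t * c t) • fun i => ∏ t, x t i ^ α t := by
  intro i
  have hy : 0 ≤ ∏ t, x t i ^ α t := prod_nonneg fun t _ => Real.rpow_nonneg (hx t i).le _
  calc ((∑ t, α t • (K + D t)) *ᵥ fun i => ∏ t, x t i ^ α t) i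
      ≤ ∑ j, (∑ t, α t * ((K + D t) i j * x t j / x t i)) * ∏ t, x t i ^ α t :=
        sum_le_sum fun j _ => sum_smul_add_apply_mul_prod_rpow_le hD hK hα hsum hx i j
    _ = (∑ t, α t * (((K + D t) *ᵥ x t) i / x t i)) * ∏ t, x t i ^ α t := by
        rw [← sum_mul, sum_comm]
        simp only [mulVec, dotProduct, sum_div, mul_sum, mul_div_assoc]
    _ ≤ (∑ t, α t * c t) * ∏ t, x t i ^ α t := by
        gcongr with t
        · exact hα t
        · exact (div_le_iff₀ (hx t i)).mpr (hc t i)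

lemma spectralRadius_sum_smul_add_le_of_lt [Fintype ι] [DecidableEq ι] (hD : ∀ t, (D t).IsDiag)
    (hK : ∀ i j, i ≠ j → 0 ≤ K i j) (hA : ∀ t i j, 0 ≤ (K + D t) i j) (hα : ∀ t, 0 ≤ α t)
    (hsum : ∑ t, α t = 1) {c : τ → ℝ}
    (hc : ∀ t, spectralRadius ℂ ((K + D t).map (algebraMap ℝ ℂ)) < ENNReal.ofReal (c t)) :
    spectralRadius ℂ ((∑ t, α t • (K + D t)).map (algebraMap ℝ ℂ)) ≤
      ENNReal.ofReal (∑ t, α t * c t) := by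
  choose x hx hxc using fun t => exists_pos_mulVec_le_of_spectralRadius_lt (hA t) (hc t)
  refine spectralRadius_le_of_mulVec_le (fun i j => ?_)
    (fun i => prod_pos fun t _ => Real.rpow_pos_of_pos (hx t i) _)
    (sum_smul_add_mulVec_prod_rpow_le hD hK hα hsum hx hxc)
  simp only [Matrix.sum_apply, smul_apply, smul_eq_mul]
  exact sum_nonneg fun t _ => mul_nonneg (hα t) (hA t i j)

end DiagonalPerturbation

end Matrix

theorem stmt7 {n m : ℕ} (K : Matrix (Fin n) (Fin n) ℝ)
    (D : Fin m → Matrix (Fin n) (Fin n) ℝ) (hD : ∀ t, (D t).IsDiag)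
    (hpos : ∀ t i j, 0 ≤ (K + D t) i j)
    (α : Fin m → ℝ) (hα : ∀ t, 0 ≤ α t) (hsum : ∑ t, α t = 1) :
    specRad (∑ t, α t • (K + D t)) ≤
      ∑ t, ENNReal.ofReal (α t) * specRad (K + D t) := by
  have hK : ∀ i j, i ≠ j → 0 ≤ K i j := by
    obtain ⟨t, -⟩ : (univ : Finset (Fin m)).Nonempty :=
      nonempty_of_sum_ne_zero (hsum ▸ one_ne_zero)
    intro i j hij
    simpa [hD t hij] using hpos t i j
  have hfin : ∀ t, specRad (K + D t) ≠ ⊤ := fun t =>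
    Matrix.spectralRadius_ne_top_of_nonneg (hpos t)
  refine ENNReal.le_of_forall_pos_le_add fun ε hε _ => ?_
  have hlt : ∀ t, specRad (K + D t) < ENNReal.ofReal ((specRad (K + D t)).toReal + ε) := fun t => by
    rw [ENNReal.ofReal_add ENNReal.toReal_nonneg ε.coe_nonneg, ENNReal.ofReal_toReal (hfin t),
      ENNReal.ofReal_coe_nnreal]
    exact ENNReal.lt_add_right (hfin t) (by exact_mod_cast hε.ne')
  calc specRad (∑ t, α t • (K + D t))
      ≤ ENNReal.ofReal (∑ t, α t * ((specRad (K + D t)).toReal + ε)) :=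
        Matrix.spectralRadius_sum_smul_add_le_of_lt hD hK hpos hα hsum hlt
    _ = ∑ t, ENNReal.ofReal (α t) * specRad (K + D t) + ε := by
        simp only [mul_add, sum_add_distrib, ← sum_mul, hsum, one_mul]
        have hterm : ∀ t ∈ univ, 0 ≤ α t * (specRad (K + D t)).toReal := fun t _ =>
          mul_nonneg (hα t) ENNReal.toReal_nonneg
        rw [ENNReal.ofReal_add (sum_nonneg hterm) ε.coe_nonneg,
          ENNReal.ofReal_sum_of_nonneg hterm, ENNReal.ofReal_coe_nnreal]
        congr 1
        exact sum_congr rfl fun t _ => by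
          rw [ENNReal.ofReal_mul (hα t), ENNReal.ofReal_toReal (hfin t)]
end

section
/- Let K be a nonnegative n×n matrix and α ∈ [0,1]. Define S_α(K) to be the matrix with entries K(i,j)^α K(j,i)^{1−α}. Then entrywise S_α(K²) ≥ S_α(K)², i.e., for all i,j, (∑_z K(i,z)K(z,j))^α (∑_z K(j,z)K(z,i))^{1−α} ≥ ∑_z K(i,z)^α K(z,i)^{1−α} K(z,j)^α K(j,z)^{1−α}. -/
open scoped ENNReal
open Finset
/-! With `a z = K i z * K z j` and `b z = K j z * K z i`, the `(i, j)` entry of `S_α(K)²` is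
`∑ z, a z ^ α * b z ^ (1 - α)` and that of `S_α(K²)` is `(∑ z, a z) ^ α * (∑ z, b z) ^ (1 - α)`,
so the inequality is Hölder's inequality with exponents `1 / α` and `1 / (1 - α)`. -/

theorem Real.sum_rpow_mul_rpow_one_sub_le {ι : Type*} (s : Finset ι) {f g : ι → ℝ}
    (hf : ∀ i ∈ s, 0 ≤ f i) (hg : ∀ i ∈ s, 0 ≤ g i) {α : ℝ} (hα₀ : 0 ≤ α) (hα₁ : α ≤ 1) :
    ∑ i ∈ s, f i ^ α * g i ^ (1 - α) ≤ (∑ i ∈ s, f i) ^ α * (∑ i ∈ s, g i) ^ (1 - α) := by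
  rcases hα₀.eq_or_lt with rfl | hα₀
  · simp
  rcases hα₁.eq_or_lt with rfl | hα₁
  · simp
  have holder := inner_le_Lp_mul_Lq_of_nonneg s (.inv_one_sub_inv hα₀ hα₁)
    (fun i hi => rpow_nonneg (hf i hi) α) (fun i hi => rpow_nonneg (hg i hi) (1 - α))
  rwa [sum_congr rfl fun i hi => rpow_rpow_inv (hf i hi) hα₀.ne',
    sum_congr rfl fun i hi => rpow_rpow_inv (hg i hi) (sub_pos.2 hα₁).ne',
    one_div, one_div, inv_inv, inv_inv] at holder

theorem stmt9 {n : ℕ} (K : Matrix (Fin n) (Fin n) ℝ) (hK : ∀ i j, 0 ≤ K i j)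
    (α : ℝ) (hα : α ∈ Set.Icc (0:ℝ) 1) :
    ∀ i j, ∑ z, (K i z) ^ α * (K z i) ^ (1 - α) * ((K z j) ^ α * (K j z) ^ (1 - α)) ≤
      (∑ z, K i z * K z j) ^ α * (∑ z, K j z * K z i) ^ (1 - α) := by
  intro i j
  calc ∑ z, K i z ^ α * K z i ^ (1 - α) * (K z j ^ α * K j z ^ (1 - α))
      = ∑ z, (K i z * K z j) ^ α * (K j z * K z i) ^ (1 - α) := by
        refine sum_congr rfl fun z _ => ?_
        rw [Real.mul_rpow (hK i z) (hK z j), Real.mul_rpow (hK j z) (hK z i)]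
        ring
    _ ≤ _ := Real.sum_rpow_mul_rpow_one_sub_le univ (fun z _ => mul_nonneg (hK i z) (hK z j))
        (fun z _ => mul_nonneg (hK j z) (hK z i)) hα.1 hα.2
end

section
/- Let K be a nonnegative n×n matrix, α ∈ [0,1], and S_α(K) the matrix with entries K(i,j)^α K(j,i)^{1−α}. Then r(S_α(K)) ≤ r(K). -/
open scoped ENNReal
open Finset
/-!
Write `S_α(K)` for `Matrix.geomSymm α K` and `S = S_α(K)`. Hölder's inequality gives
`S_α(A) S_α(B) ≤ S_α(AB)` entrywise for commuting nonnegative `A, B`, hence `S^m ≤ S_α(K^m)`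
entrywise. By weighted AM–GM every entry of `S_α(K^m)` is at most the largest entry of `K^m`, so in
the `ℓ∞` operator norm `‖S^m‖ ≤ n ‖K^m‖`. Gelfand's formula then gives `r(S) ≤ r(K)`, since the
factor `n^(1/m)` tends to `1`.
-/

open scoped NNReal
open Filter Topology

attribute [local instance] Matrix.linftyOpSeminormedAddCommGroup Matrix.linftyOpNormedRing
  Matrix.linftyOpNormedAlgebra

namespace Real

lemma rpow_mul_rpow_one_sub_self {x : ℝ} (hx : 0 ≤ x) (α : ℝ) : x ^ α * x ^ (1 - α) = x := by
  rw [← rpow_add' hx (by norm_num), add_sub_cancel, rpow_one]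

lemma sum_rpow_mul_rpow_one_sub_le_s10 {ι : Type*} (s : Finset ι) {f g : ι → ℝ} {α : ℝ}
    (hα₀ : 0 ≤ α) (hα₁ : α ≤ 1) (hf : ∀ i ∈ s, 0 ≤ f i) (hg : ∀ i ∈ s, 0 ≤ g i) :
    ∑ i ∈ s, f i ^ α * g i ^ (1 - α) ≤ (∑ i ∈ s, f i) ^ α * (∑ i ∈ s, g i) ^ (1 - α) := by
  rcases hα₀.eq_or_lt with rfl | hα₀
  · simp
  rcases hα₁.eq_or_lt with rfl | hα₁
  · simp
  have hpq := HolderConjugate.inv_one_sub_inv hα₀ hα₁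
  have hf' : ∀ i ∈ s, 0 ≤ f i ^ α := fun i hi => rpow_nonneg (hf i hi) _
  have hg' : ∀ i ∈ s, 0 ≤ g i ^ (1 - α) := fun i hi => rpow_nonneg (hg i hi) _
  convert inner_le_Lp_mul_Lq_of_nonneg s hpq hf' hg' using 3
  · exact sum_congr rfl fun i hi => (rpow_rpow_inv (hf i hi) hα₀.ne').symm
  · rw [one_div, inv_inv]
  · exact sum_congr rfl fun i hi => (rpow_rpow_inv (hg i hi) (sub_pos.2 hα₁).ne').symm
  · rw [one_div, inv_inv]

end Real

theorem spectralRadius_le_of_nnnorm_pow_le {A : Type*} [NormedRing A] [NormedAlgebra ℂ A]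
    [CompleteSpace A] {a b : A} (C : ℝ≥0) (h : ∀ m : ℕ, ‖a ^ m‖₊ ≤ C * ‖b ^ m‖₊) :
    spectralRadius ℂ a ≤ spectralRadius ℂ b := by
  have hscaled : ∀ y : ℝ≥0, 1 < y → spectralRadius ℂ a ≤ y * spectralRadius ℂ b := by
    intro y hy
    refine le_of_tendsto_of_tendsto
      (spectrum.pow_nnnorm_pow_one_div_tendsto_nhds_spectralRadius a)
      (ENNReal.Tendsto.const_mul (spectrum.pow_nnnorm_pow_one_div_tendsto_nhds_spectralRadius b)
        (Or.inr ENNReal.coe_ne_top)) ?_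
    filter_upwards [ENNReal.eventually_pow_one_div_le ENNReal.coe_ne_top
      (ENNReal.coe_lt_coe.2 hy)] with m hm
    have hm₀ : (0 : ℝ) ≤ 1 / m := by positivity
    calc (‖a ^ m‖₊ : ℝ≥0∞) ^ (1 / m : ℝ)
        ≤ ((C : ℝ≥0∞) * ‖b ^ m‖₊) ^ (1 / m : ℝ) :=
          ENNReal.rpow_le_rpow (mod_cast h m) hm₀
      _ = (C : ℝ≥0∞) ^ (1 / m : ℝ) * (‖b ^ m‖₊ : ℝ≥0∞) ^ (1 / m : ℝ) :=
          ENNReal.mul_rpow_of_nonneg _ _ hm₀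
      _ ≤ y * (‖b ^ m‖₊ : ℝ≥0∞) ^ (1 / m : ℝ) := by gcongr
  have hlim : Tendsto (fun y : ℝ≥0 => (y : ℝ≥0∞) * spectralRadius ℂ b) (𝓝[>] 1)
      (𝓝 (spectralRadius ℂ b)) := by
    simpa using ENNReal.Tendsto.mul_const
      ((ENNReal.continuous_coe.tendsto 1).mono_left nhdsWithin_le_nhds) (Or.inl one_ne_zero)
  exact ge_of_tendsto hlim (eventually_nhdsWithin_of_forall hscaled)

namespace Matrix

variable {ι : Type*}

lemma nnnorm_apply_le_linfty_opNNNorm {m n α : Type*} [Fintype m] [Fintype n]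
    [SeminormedAddCommGroup α] (A : Matrix m n α) (i : m) (j : n) : ‖A i j‖₊ ≤ ‖A‖₊ := by
  rw [linfty_opNNNorm_def]
  exact (single_le_sum (fun k _ => zero_le) (mem_univ j)).trans
    (le_sup (f := fun i => ∑ k, ‖A i k‖₊) (mem_univ i))

lemma linfty_opNNNorm_le_card_mul {m n α : Type*} [Fintype m] [Fintype n]
    [SeminormedAddCommGroup α] {A : Matrix m n α} {c : ℝ≥0} (h : ∀ i j, ‖A i j‖₊ ≤ c) :
    ‖A‖₊ ≤ Fintype.card n * c := by
  rw [linfty_opNNNorm_def]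
  refine Finset.sup_le fun i _ => ?_
  simpa using sum_le_sum fun j (_ : j ∈ univ) => h i j

lemma linfty_opNNNorm_map_ofReal [Fintype ι] (A : Matrix ι ι ℝ) :
    ‖A.map (algebraMap ℝ ℂ)‖₊ = ‖A‖₊ := by
  simp [linfty_opNNNorm_def]

noncomputable def geomSymm (α : ℝ) (K : Matrix ι ι ℝ) : Matrix ι ι ℝ :=
  of fun i j => K i j ^ α * K j i ^ (1 - α)

variable {α : ℝ} {K : Matrix ι ι ℝ}

@[simp]
lemma geomSymm_apply (α : ℝ) (K : Matrix ι ι ℝ) (i j : ι) :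
    geomSymm α K i j = K i j ^ α * K j i ^ (1 - α) :=
  rfl

lemma geomSymm_apply_nonneg (hK : ∀ i j, 0 ≤ K i j) (i j : ι) : 0 ≤ geomSymm α K i j :=
  mul_nonneg (Real.rpow_nonneg (hK i j) _) (Real.rpow_nonneg (hK j i) _)

lemma geomSymm_apply_le (hα₀ : 0 ≤ α) (hα₁ : α ≤ 1) (hK : ∀ i j, 0 ≤ K i j) (i j : ι) :
    geomSymm α K i j ≤ α * K i j + (1 - α) * K j i :=
  Real.geom_mean_le_arith_mean2_weighted hα₀ (sub_nonneg.2 hα₁) (hK i j) (hK j i) (by ring)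

lemma geomSymm_one [DecidableEq ι] (α : ℝ) : geomSymm α (1 : Matrix ι ι ℝ) = 1 := by
  ext i j
  rw [geomSymm_apply]
  by_cases h : i = j
  · rw [h, one_apply_eq, Real.one_rpow, Real.one_rpow, one_mul]
  · rw [one_apply_ne h, one_apply_ne (Ne.symm h), Real.rpow_mul_rpow_one_sub_self le_rfl]

lemma geomSymm_mul_geomSymm_apply_le [Fintype ι] (hα₀ : 0 ≤ α) (hα₁ : α ≤ 1)
    {A B : Matrix ι ι ℝ} (hA : ∀ i j, 0 ≤ A i j) (hB : ∀ i j, 0 ≤ B i j) (hAB : Commute A B)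
    (i j : ι) :
    (geomSymm α A * geomSymm α B) i j ≤ geomSymm α (A * B) i j := by
  calc (geomSymm α A * geomSymm α B) i j
      = ∑ k, (A i k * B k j) ^ α * (B j k * A k i) ^ (1 - α) := by
        simp only [mul_apply, geomSymm_apply]
        refine sum_congr rfl fun k _ => ?_
        rw [Real.mul_rpow (hA i k) (hB k j), Real.mul_rpow (hB j k) (hA k i)]
        ring
    _ ≤ (∑ k, A i k * B k j) ^ α * (∑ k, B j k * A k i) ^ (1 - α) :=
        Real.sum_rpow_mul_rpow_one_sub_le_s10 _ hα₀ hα₁ (fun k _ => mul_nonneg (hA i k) (hB k j))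
          (fun k _ => mul_nonneg (hB j k) (hA k i))
    _ = (A * B) i j ^ α * (B * A) j i ^ (1 - α) := by simp only [mul_apply]
    _ = geomSymm α (A * B) i j := by rw [← hAB.eq, geomSymm_apply]

lemma geomSymm_pow_apply_le [Fintype ι] [DecidableEq ι] (hα₀ : 0 ≤ α) (hα₁ : α ≤ 1)
    (hK : ∀ i j, 0 ≤ K i j) (m : ℕ) (i j : ι) :
    (geomSymm α K ^ m) i j ≤ geomSymm α (K ^ m) i j := by
  induction m generalizing i j with
  | zero => rw [pow_zero, pow_zero, geomSymm_one]
  | succ m ih =>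
    calc (geomSymm α K ^ (m + 1)) i j
        ≤ (geomSymm α (K ^ m) * geomSymm α K) i j := by
          rw [pow_succ, mul_apply, mul_apply]
          exact sum_le_sum fun k _ => mul_le_mul_of_nonneg_right (ih i k)
            (geomSymm_apply_nonneg hK k j)
      _ ≤ geomSymm α (K ^ (m + 1)) i j := by
          rw [pow_succ]
          exact geomSymm_mul_geomSymm_apply_le hα₀ hα₁ (pow_apply_nonneg hK m) hK
            (Commute.self_pow K m).symm i j

lemma linfty_opNNNorm_geomSymm_pow_le [Fintype ι] [DecidableEq ι] (hα₀ : 0 ≤ α) (hα₁ : α ≤ 1)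
    (hK : ∀ i j, 0 ≤ K i j) (m : ℕ) :
    ‖geomSymm α K ^ m‖₊ ≤ Fintype.card ι * ‖K ^ m‖₊ := by
  refine linfty_opNNNorm_le_card_mul fun i j => ?_
  have hentry : ∀ i j, (K ^ m) i j ≤ ‖K ^ m‖ := fun i j =>
    (Real.le_norm_self _).trans (nnnorm_apply_le_linfty_opNNNorm (K ^ m) i j)
  rw [← NNReal.coe_le_coe, coe_nnnorm,
    Real.norm_of_nonneg (pow_apply_nonneg (geomSymm_apply_nonneg hK) m i j)]
  calc (geomSymm α K ^ m) i j
      ≤ α * (K ^ m) i j + (1 - α) * (K ^ m) j i :=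
        (geomSymm_pow_apply_le hα₀ hα₁ hK m i j).trans
          (geomSymm_apply_le hα₀ hα₁ (pow_apply_nonneg hK m) i j)
    _ ≤ α * ‖K ^ m‖ + (1 - α) * ‖K ^ m‖ :=
        add_le_add (mul_le_mul_of_nonneg_left (hentry i j) hα₀)
          (mul_le_mul_of_nonneg_left (hentry j i) (sub_nonneg.2 hα₁))
    _ = ‖K ^ m‖₊ := by rw [coe_nnnorm]; ring

end Matrix

theorem stmt10 {n : ℕ} (K : Matrix (Fin n) (Fin n) ℝ) (hK : ∀ i j, 0 ≤ K i j)
    (α : ℝ) (hα : α ∈ Set.Icc (0:ℝ) 1) :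
    specRad (Matrix.of fun i j => (K i j) ^ α * (K j i) ^ (1 - α)) ≤ specRad K := by
  obtain ⟨hα₀, hα₁⟩ := hα
  refine spectralRadius_le_of_nnnorm_pow_le (Fintype.card (Fin n)) fun m => ?_
  rw [← Matrix.map_pow, ← Matrix.map_pow, Matrix.linfty_opNNNorm_map_ofReal,
    Matrix.linfty_opNNNorm_map_ofReal]
  exact Matrix.linfty_opNNNorm_geomSymm_pow_le hα₀ hα₁ hK m
end

section
/- Let K be a nonnegative n×n matrix and α, β ≥ 0 with α + β ≥ 1. Define S_{α,β}(K) to be the matrix with entries K(i,j)^α K(j,i)^β. Then r(S_{α,β}(K)) ≤ r(K)^{α+β}. -/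
open scoped ENNReal
open Finset
/-
For `α + β ≥ 1` and nonnegative reals, Hölder's inequality with exponents `α/(α+β) + β/(α+β) = 1`
followed by superadditivity of `x ↦ x ^ (α+β)` gives `∑ aₖ^α bₖ^β ≤ (∑ aₖ)^α (∑ bₖ)^β`. Applied to
the sums defining matrix products, it shows by induction that `S_{α,β}(K)^m ≤ S_{α,β}(K^m)`
entrywise. Every entry of a nonnegative matrix is bounded by its `ℓ∞` operator norm, so
`‖S_{α,β}(K)^m‖ ≤ n ‖K^m‖^(α+β)`; taking `m`-th roots, Gelfand's formula gives the claim.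
-/

open Filter Topology
open scoped NNReal

namespace NNReal

variable {ι : Type*}

theorem sum_rpow_le_rpow_sum (s : Finset ι) (f : ι → ℝ≥0) {p : ℝ} (hp : 1 ≤ p) :
    ∑ i ∈ s, f i ^ p ≤ (∑ i ∈ s, f i) ^ p := by
  classical
  induction s using Finset.induction_on with
  | empty => simp [zero_rpow (by linarith : p ≠ 0)]
  | insert a s ha ih =>
    rw [sum_insert ha, sum_insert ha]
    exact (add_le_add le_rfl ih).trans (add_rpow_le_rpow_add _ _ hp)

theorem sum_rpow_mul_rpow_le_of_add_eq_one (s : Finset ι) (f g : ι → ℝ≥0) {u v : ℝ}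
    (hu : 0 ≤ u) (hv : 0 ≤ v) (huv : u + v = 1) :
    ∑ i ∈ s, f i ^ u * g i ^ v ≤ (∑ i ∈ s, f i) ^ u * (∑ i ∈ s, g i) ^ v := by
  rcases hu.eq_or_lt with rfl | hu
  · simp [show v = 1 by linarith]
  rcases hv.eq_or_lt with rfl | hv
  · simp [show u = 1 by linarith]
  simpa [← rpow_mul, hu.ne', hv.ne'] using
    inner_le_Lp_mul_Lq s (fun i => f i ^ u) (fun i => g i ^ v) (.inv_inv hu hv huv)

theorem sum_rpow_mul_rpow_le (s : Finset ι) (f g : ι → ℝ≥0) {α β : ℝ}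
    (hα : 0 ≤ α) (hβ : 0 ≤ β) (hαβ : 1 ≤ α + β) :
    ∑ i ∈ s, f i ^ α * g i ^ β ≤ (∑ i ∈ s, f i) ^ α * (∑ i ∈ s, g i) ^ β := by
  set t := α + β
  have ht : 0 < t := by linarith
  have split : ∀ x y : ℝ≥0, x ^ α * y ^ β = (x ^ (α / t) * y ^ (β / t)) ^ t := fun x y => by
    rw [mul_rpow, ← rpow_mul, ← rpow_mul, div_mul_cancel₀ _ ht.ne', div_mul_cancel₀ _ ht.ne']
  simp only [split]
  calc ∑ i ∈ s, (f i ^ (α / t) * g i ^ (β / t)) ^ t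
      ≤ (∑ i ∈ s, f i ^ (α / t) * g i ^ (β / t)) ^ t := sum_rpow_le_rpow_sum s _ hαβ
    _ ≤ ((∑ i ∈ s, f i) ^ (α / t) * (∑ i ∈ s, g i) ^ (β / t)) ^ t := by
      gcongr
      exact sum_rpow_mul_rpow_le_of_add_eq_one s f g (by positivity) (by positivity)
        (by rw [← add_div, div_self ht.ne'])

end NNReal

theorem ENNReal.tendsto_coe_rpow_one_div_atTop {c : ℝ≥0} (hc : c ≠ 0) :
    Tendsto (fun m : ℕ => (c : ℝ≥0∞) ^ (1 / (m : ℝ))) atTop (𝓝 1) := by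
  have hreal : Tendsto (fun m : ℕ => (c : ℝ) ^ (1 / (m : ℝ))) atTop (𝓝 1) := by
    simpa [Function.comp_def] using
      (Real.continuousAt_const_rpow (NNReal.coe_ne_zero.2 hc)).tendsto.comp
        tendsto_one_div_atTop_nhds_zero_nat
  simp_rw [← ENNReal.coe_rpow_of_ne_zero hc, ← ENNReal.coe_one]
  exact ENNReal.tendsto_coe.2 (NNReal.tendsto_coe.1 (by simpa using hreal))

theorem spectralRadius_le_rpow_of_nnnorm_pow_le {A B : Type*} [NormedRing A] [NormedAlgebra ℂ A]
    [CompleteSpace A] [NormedRing B] [NormedAlgebra ℂ B] [CompleteSpace B] {a : A} {b : B}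
    {c : ℝ≥0} {t : ℝ} (ht : 0 ≤ t) (h : ∀ m : ℕ, ‖a ^ m‖₊ ≤ c * ‖b ^ m‖₊ ^ t) :
    spectralRadius ℂ a ≤ spectralRadius ℂ b ^ t := by
  -- `c + 1` rather than `c`, so that its `m`-th roots tend to `1`.
  have hbound : ∀ m : ℕ, (‖a ^ m‖₊ : ℝ≥0∞) ^ (1 / (m : ℝ)) ≤
      ((c + 1 : ℝ≥0) : ℝ≥0∞) ^ (1 / (m : ℝ)) * ((‖b ^ m‖₊ : ℝ≥0∞) ^ (1 / (m : ℝ))) ^ t := by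
    intro m
    have hm : (0 : ℝ) ≤ 1 / (m : ℝ) := by positivity
    have hc : ‖a ^ m‖₊ ≤ (c + 1) * ‖b ^ m‖₊ ^ t := (h m).trans (by gcongr; exact le_self_add)
    calc (‖a ^ m‖₊ : ℝ≥0∞) ^ (1 / (m : ℝ))
        ≤ (((c + 1 : ℝ≥0) : ℝ≥0∞) * (‖b ^ m‖₊ : ℝ≥0∞) ^ t) ^ (1 / (m : ℝ)) := by
          rw [← ENNReal.coe_rpow_of_nonneg _ ht, ← ENNReal.coe_mul]
          exact ENNReal.rpow_le_rpow (ENNReal.coe_le_coe.2 hc) hm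
      _ = _ := by
          rw [ENNReal.mul_rpow_of_nonneg _ _ hm, ← ENNReal.rpow_mul, ← ENNReal.rpow_mul, mul_comm t]
  have hlim := ENNReal.Tendsto.mul
    (ENNReal.tendsto_coe_rpow_one_div_atTop (c := c + 1) (by positivity))
    (Or.inl one_ne_zero)
    ((spectrum.pow_nnnorm_pow_one_div_tendsto_nhds_spectralRadius b).ennrpow_const t)
    (Or.inr ENNReal.one_ne_top)
  simpa using le_of_tendsto_of_tendsto'
    (spectrum.pow_nnnorm_pow_one_div_tendsto_nhds_spectralRadius a) hlim hbound

namespace Matrix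

variable {m n : Type*} [Fintype m] [Fintype n]

/-- The paper's `S_{α,β}(M)`. -/
noncomputable def rpowHadamardTranspose (α β : ℝ) (M : Matrix n n ℝ≥0) : Matrix n n ℝ≥0 :=
  of fun i j => M i j ^ α * M j i ^ β

theorem rpowHadamardTranspose_pow_apply_le [DecidableEq n] (M : Matrix n n ℝ≥0) {α β : ℝ}
    (hα : 0 ≤ α) (hβ : 0 ≤ β) (hαβ : 1 ≤ α + β) (k : ℕ) (i j : n) :
    (rpowHadamardTranspose α β M ^ k) i j ≤ rpowHadamardTranspose α β (M ^ k) i j := by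
  induction k generalizing i j with
  | zero =>
    rcases eq_or_ne i j with rfl | hij
    · simp [rpowHadamardTranspose]
    · simp [one_apply_ne hij]
  | succ k ih =>
    calc (rpowHadamardTranspose α β M ^ (k + 1)) i j
        ≤ ∑ l, ((M ^ k) i l * M l j) ^ α * (M j l * (M ^ k) l i) ^ β := by
          rw [pow_succ, mul_apply]
          refine sum_le_sum fun l _ => ?_
          calc _ ≤ rpowHadamardTranspose α β (M ^ k) i l * rpowHadamardTranspose α β M l j := by
                gcongr; exact ih i l
            _ = _ := by simp only [rpowHadamardTranspose, of_apply, NNReal.mul_rpow]; ring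
      _ ≤ (∑ l, (M ^ k) i l * M l j) ^ α * (∑ l, M j l * (M ^ k) l i) ^ β :=
          NNReal.sum_rpow_mul_rpow_le _ _ _ hα hβ hαβ
      _ = rpowHadamardTranspose α β (M ^ (k + 1)) i j := by
          rw [rpowHadamardTranspose, of_apply, ← mul_apply, ← mul_apply, ← pow_succ, ← pow_succ']

section LinftyOpNorm

attribute [local instance] Matrix.linftyOpNormedAddCommGroup

theorem linfty_opNNNorm_map_algebraMap (N : Matrix m n ℝ≥0) :
    ‖N.map (algebraMap ℝ≥0 ℂ)‖₊ = univ.sup fun i => ∑ j, N i j := by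
  simp [linfty_opNNNorm_def]

theorem le_linfty_opNNNorm_map_algebraMap (N : Matrix m n ℝ≥0) (i : m) (j : n) :
    N i j ≤ ‖N.map (algebraMap ℝ≥0 ℂ)‖₊ := by
  rw [linfty_opNNNorm_map_algebraMap]
  exact (single_le_sum (fun k _ => zero_le) (mem_univ j)).trans
    (le_sup (f := fun i => ∑ j, N i j) (mem_univ i))

theorem linfty_opNNNorm_map_algebraMap_mono {P Q : Matrix m n ℝ≥0}
    (h : ∀ i j, P i j ≤ Q i j) :
    ‖P.map (algebraMap ℝ≥0 ℂ)‖₊ ≤ ‖Q.map (algebraMap ℝ≥0 ℂ)‖₊ := by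
  simp only [linfty_opNNNorm_map_algebraMap]
  exact sup_mono_fun fun i _ => sum_le_sum fun j _ => h i j

theorem linfty_opNNNorm_map_rpowHadamardTranspose_le (N : Matrix n n ℝ≥0)
    {α β : ℝ} (hα : 0 ≤ α) (hβ : 0 ≤ β) :
    ‖(rpowHadamardTranspose α β N).map (algebraMap ℝ≥0 ℂ)‖₊ ≤
      Fintype.card n * ‖N.map (algebraMap ℝ≥0 ℂ)‖₊ ^ (α + β) := by
  rw [linfty_opNNNorm_map_algebraMap]
  refine Finset.sup_le fun i _ => ?_
  calc ∑ j, rpowHadamardTranspose α β N i j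
      ≤ ∑ _j : n, ‖N.map (algebraMap ℝ≥0 ℂ)‖₊ ^ α * ‖N.map (algebraMap ℝ≥0 ℂ)‖₊ ^ β :=
        sum_le_sum fun j _ => by
          rw [rpowHadamardTranspose, of_apply]
          gcongr <;> exact le_linfty_opNNNorm_map_algebraMap N _ _
    _ = Fintype.card n * ‖N.map (algebraMap ℝ≥0 ℂ)‖₊ ^ (α + β) := by
        rw [sum_const, card_univ, nsmul_eq_mul, NNReal.rpow_add_of_nonneg _ hα hβ]

theorem linfty_opNNNorm_map_rpowHadamardTranspose_pow_le [DecidableEq n] (M : Matrix n n ℝ≥0)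
    {α β : ℝ} (hα : 0 ≤ α) (hβ : 0 ≤ β) (hαβ : 1 ≤ α + β) (k : ℕ) :
    ‖(rpowHadamardTranspose α β M ^ k).map (algebraMap ℝ≥0 ℂ)‖₊ ≤
      Fintype.card n * ‖(M ^ k).map (algebraMap ℝ≥0 ℂ)‖₊ ^ (α + β) :=
  (linfty_opNNNorm_map_algebraMap_mono
    (rpowHadamardTranspose_pow_apply_le M hα hβ hαβ k)).trans
    (linfty_opNNNorm_map_rpowHadamardTranspose_le _ hα hβ)

end LinftyOpNorm

end Matrix

attribute [local instance] Matrix.linftyOpNormedRing Matrix.linftyOpNormedAlgebra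

open Matrix

theorem stmt12 {n : ℕ} (K : Matrix (Fin n) (Fin n) ℝ) (hK : ∀ i j, 0 ≤ K i j)
    (α β : ℝ) (hα : 0 ≤ α) (hβ : 0 ≤ β) (hab : 1 ≤ α + β) :
    specRad (Matrix.of fun i j => (K i j) ^ α * (K j i) ^ β) ≤
      specRad K ^ (α + β) := by
  set M := K.map Real.toNNReal
  have hKM : K.map (algebraMap ℝ ℂ) = M.map (algebraMap ℝ≥0 ℂ) := by
    ext i j; simp [M, IsScalarTower.algebraMap_apply ℝ≥0 ℝ ℂ, hK i j]
  have hSM : (of fun i j => K i j ^ α * K j i ^ β).map (algebraMap ℝ ℂ) =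
      (rpowHadamardTranspose α β M).map (algebraMap ℝ≥0 ℂ) := by
    ext i j
    simp [M, rpowHadamardTranspose, IsScalarTower.algebraMap_apply ℝ≥0 ℝ ℂ, hK i j, hK j i]
  rw [specRad, specRad, hKM, hSM]
  refine spectralRadius_le_rpow_of_nnnorm_pow_le (c := Fintype.card (Fin n)) (by linarith)
    fun m => ?_
  rw [← Matrix.map_pow, ← Matrix.map_pow]
  exact linfty_opNNNorm_map_rpowHadamardTranspose_pow_le M hα hβ hab m
end

section
/- Let K be a nonnegative n×n matrix, α ∈ [0,1], S_α(K) the matrix with entries K(i,j)^α K(j,i)^{1−α}, and S(K) = S_{1/2}(K). Then r(S(K)) ≤ r(S_α(K)) ≤ r(K). -/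
open scoped ENNReal
open Finset

/-!
Write `S_β(P)` for the matrix with entries `P i j ^ β * P j i ^ (1 - β)`. For `P ≥ 0` and
`β ∈ [0, 1]`, Hölder's inequality and induction on `m` give the entrywise bound
`S_β(P)^m i j ≤ (P^m i j)^β (P^m j i)^(1-β)`, and weighted AM-GM bounds this by the entry of
`β P^m + (1 - β) (P^m)ᵀ`. The Frobenius norm is monotone on nonnegative matrices and invariant
under transposition, so `‖S_β(P)^m‖ ≤ ‖P^m‖` for all `m`, and Gelfand's formula yields
`r(S_β(P)) ≤ r(P)`. The first inequality is the case `β = 1/2`, `P = S_α(K)`, because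
`S_{1/2}(S_α(K)) = S_{1/2}(K)`.
-/

theorem Real.sum_rpow_mul_rpow_one_sub_le_s14 {ι : Type*} (s : Finset ι) {a b : ι → ℝ}
    (ha : ∀ i ∈ s, 0 ≤ a i) (hb : ∀ i ∈ s, 0 ≤ b i) {β : ℝ} (h0 : 0 ≤ β) (h1 : β ≤ 1) :
    ∑ i ∈ s, a i ^ β * b i ^ (1 - β) ≤ (∑ i ∈ s, a i) ^ β * (∑ i ∈ s, b i) ^ (1 - β) := by
  rcases h0.eq_or_lt with rfl | h0
  · simp
  rcases h1.eq_or_lt with rfl | h1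
  · simp
  have h1' : 1 - β ≠ 0 := (sub_pos.2 h1).ne'
  convert Real.inner_le_Lp_mul_Lq_of_nonneg s (Real.HolderConjugate.inv_one_sub_inv h0 h1)
    (fun i hi => Real.rpow_nonneg (ha i hi) β) (fun i hi => Real.rpow_nonneg (hb i hi) (1 - β))
    using 3 <;> simp_all [Real.rpow_rpow_inv, h0.ne']

theorem spectrum.spectralRadius_le_of_forall_norm_pow_le {A B : Type*} [NormedRing A]
    [NormedAlgebra ℂ A] [CompleteSpace A] [NormedRing B] [NormedAlgebra ℂ B] [CompleteSpace B]
    {a : A} {b : B} (h : ∀ m : ℕ, ‖a ^ m‖ ≤ ‖b ^ m‖) :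
    spectralRadius ℂ a ≤ spectralRadius ℂ b :=
  le_of_tendsto_of_tendsto' (pow_nnnorm_pow_one_div_tendsto_nhds_spectralRadius a)
    (pow_nnnorm_pow_one_div_tendsto_nhds_spectralRadius b) fun m =>
      ENNReal.rpow_le_rpow (ENNReal.coe_le_coe.2 (h m)) (by positivity)

namespace Matrix

variable {ι : Type*}

noncomputable def geomMeanTranspose (β : ℝ) (P : Matrix ι ι ℝ) : Matrix ι ι ℝ :=
  of fun i j => P i j ^ β * P j i ^ (1 - β)

theorem geomMeanTranspose_apply_nonneg (β : ℝ) (P : Matrix ι ι ℝ) (hP : ∀ i j, 0 ≤ P i j)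
    (i j : ι) : 0 ≤ geomMeanTranspose β P i j :=
  mul_nonneg (Real.rpow_nonneg (hP i j) _) (Real.rpow_nonneg (hP j i) _)

theorem geomMeanTranspose_half_geomMeanTranspose {P : Matrix ι ι ℝ} (hP : ∀ i j, 0 ≤ P i j)
    (α : ℝ) : geomMeanTranspose (1 / 2) (geomMeanTranspose α P) = geomMeanTranspose (1 / 2) P := by
  have hx (x : ℝ) (hx : 0 ≤ x) : x ^ α * x ^ (1 - α) = x := by
    rw [← Real.rpow_add' hx (by simp), add_sub_cancel, Real.rpow_one]
  ext i j
  have hS := geomMeanTranspose_apply_nonneg α P hP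
  simp only [geomMeanTranspose, of_apply] at hS ⊢
  rw [show (1 : ℝ) - 1 / 2 = 1 / 2 by norm_num, ← Real.mul_rpow (hS i j) (hS j i),
    ← Real.mul_rpow (hP i j) (hP j i)]
  congr 1
  calc P i j ^ α * P j i ^ (1 - α) * (P j i ^ α * P i j ^ (1 - α))
      = (P i j ^ α * P i j ^ (1 - α)) * (P j i ^ α * P j i ^ (1 - α)) := by ring
    _ = P i j * P j i := by rw [hx _ (hP i j), hx _ (hP j i)]

variable [Fintype ι] [DecidableEq ι]

theorem pow_geomMeanTranspose_apply_le {P : Matrix ι ι ℝ} (hP : ∀ i j, 0 ≤ P i j) {β : ℝ}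
    (h0 : 0 ≤ β) (h1 : β ≤ 1) (m : ℕ) (i j : ι) :
    (geomMeanTranspose β P ^ m) i j ≤ (P ^ m) i j ^ β * (P ^ m) j i ^ (1 - β) := by
  induction m generalizing i with
  | zero =>
    by_cases h : i = j
    · simp [h]
    · simp only [pow_zero, one_apply_ne h, one_apply_ne (Ne.symm h)]
      positivity
  | succ m ih =>
    have hPm := pow_apply_nonneg hP m
    calc (geomMeanTranspose β P ^ (m + 1)) i j
        = ∑ k, geomMeanTranspose β P i k * (geomMeanTranspose β P ^ m) k j := by
          rw [pow_succ', mul_apply]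
      _ ≤ ∑ k, (P i k * (P ^ m) k j) ^ β * ((P ^ m) j k * P k i) ^ (1 - β) := by
          refine sum_le_sum fun k _ => ?_
          calc geomMeanTranspose β P i k * (geomMeanTranspose β P ^ m) k j
              ≤ (P i k ^ β * P k i ^ (1 - β)) * ((P ^ m) k j ^ β * (P ^ m) j k ^ (1 - β)) :=
                mul_le_mul_of_nonneg_left (ih k) (geomMeanTranspose_apply_nonneg β P hP i k)
            _ = _ := by
                rw [Real.mul_rpow (hP i k) (hPm k j), Real.mul_rpow (hPm j k) (hP k i)]
                ring
      _ ≤ (∑ k, P i k * (P ^ m) k j) ^ β * (∑ k, (P ^ m) j k * P k i) ^ (1 - β) :=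
          Real.sum_rpow_mul_rpow_one_sub_le_s14 _ (fun k _ => mul_nonneg (hP i k) (hPm k j))
            (fun k _ => mul_nonneg (hPm j k) (hP k i)) h0 h1
      _ = (P ^ (m + 1)) i j ^ β * (P ^ (m + 1)) j i ^ (1 - β) := by
          rw [← mul_apply, ← mul_apply, ← pow_succ', ← pow_succ]

theorem pow_geomMeanTranspose_apply_le_add {P : Matrix ι ι ℝ} (hP : ∀ i j, 0 ≤ P i j) {β : ℝ}
    (h0 : 0 ≤ β) (h1 : β ≤ 1) (m : ℕ) (i j : ι) :
    (geomMeanTranspose β P ^ m) i j ≤ (β • P ^ m + (1 - β) • (P ^ m)ᵀ) i j :=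
  (pow_geomMeanTranspose_apply_le hP h0 h1 m i j).trans <|
    Real.geom_mean_le_arith_mean2_weighted h0 (sub_nonneg.2 h1) (pow_apply_nonneg hP m i j)
      (pow_apply_nonneg hP m j i) (add_sub_cancel β 1)

open scoped Matrix.Norms.Frobenius

theorem frobenius_norm_le_of_nonneg_of_le {m n : Type*} [Fintype m] [Fintype n]
    {A B : Matrix m n ℝ} (hA : ∀ i j, 0 ≤ A i j)
    (hAB : ∀ i j, A i j ≤ B i j) : ‖A‖ ≤ ‖B‖ := by
  simp only [frobenius_norm_def]
  gcongr with i _ j _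
  exact abs_le_abs_of_nonneg (hA i j) (hAB i j)

theorem frobenius_norm_pow_geomMeanTranspose_le {P : Matrix ι ι ℝ} (hP : ∀ i j, 0 ≤ P i j)
    {β : ℝ} (h0 : 0 ≤ β) (h1 : β ≤ 1) (m : ℕ) :
    ‖geomMeanTranspose β P ^ m‖ ≤ ‖P ^ m‖ :=
  calc ‖geomMeanTranspose β P ^ m‖ ≤ ‖β • P ^ m + (1 - β) • (P ^ m)ᵀ‖ :=
        frobenius_norm_le_of_nonneg_of_le
          (pow_apply_nonneg (geomMeanTranspose_apply_nonneg β P hP) m)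
          (pow_geomMeanTranspose_apply_le_add hP h0 h1 m)
    _ ≤ β * ‖P ^ m‖ + (1 - β) * ‖(P ^ m)ᵀ‖ := by
        refine (norm_add_le _ _).trans ?_
        rw [norm_smul, norm_smul, Real.norm_of_nonneg h0, Real.norm_of_nonneg (sub_nonneg.2 h1)]
    _ = ‖P ^ m‖ := by rw [frobenius_norm_transpose]; ring

theorem frobenius_norm_pow_map_complex (A : Matrix ι ι ℝ) (m : ℕ) :
    ‖A.map (algebraMap ℝ ℂ) ^ m‖ = ‖A ^ m‖ := by
  rw [← RingHom.mapMatrix_apply, ← map_pow, RingHom.mapMatrix_apply]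
  exact frobenius_norm_map_eq _ _ fun x => Complex.norm_real x

theorem spectralRadius_geomMeanTranspose_le {P : Matrix ι ι ℝ} (hP : ∀ i j, 0 ≤ P i j)
    {β : ℝ} (h0 : 0 ≤ β) (h1 : β ≤ 1) :
    spectralRadius ℂ ((geomMeanTranspose β P).map (algebraMap ℝ ℂ)) ≤
      spectralRadius ℂ (P.map (algebraMap ℝ ℂ)) :=
  spectrum.spectralRadius_le_of_forall_norm_pow_le fun m => by
    simpa only [frobenius_norm_pow_map_complex] using
      frobenius_norm_pow_geomMeanTranspose_le hP h0 h1 m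

end Matrix

theorem stmt14 {n : ℕ} (K : Matrix (Fin n) (Fin n) ℝ) (hK : ∀ i j, 0 ≤ K i j)
    (α : ℝ) (hα : α ∈ Set.Icc (0:ℝ) 1) :
    specRad (Matrix.of fun i j => (K i j) ^ ((1:ℝ)/2) * (K j i) ^ ((1:ℝ)/2)) ≤
        specRad (Matrix.of fun i j => (K i j) ^ α * (K j i) ^ (1 - α)) ∧
      specRad (Matrix.of fun i j => (K i j) ^ α * (K j i) ^ (1 - α)) ≤ specRad K := by
  have hS : (Matrix.of fun i j => K i j ^ ((1:ℝ)/2) * K j i ^ ((1:ℝ)/2)) =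
      (K.geomMeanTranspose α).geomMeanTranspose (1 / 2) := by
    rw [Matrix.geomMeanTranspose_half_geomMeanTranspose hK]
    norm_num [Matrix.geomMeanTranspose]
  rw [hS]
  exact ⟨Matrix.spectralRadius_geomMeanTranspose_le
      (Matrix.geomMeanTranspose_apply_nonneg α K hK) (by norm_num) (by norm_num),
    Matrix.spectralRadius_geomMeanTranspose_le hK hα.1 hα.2⟩
end
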